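/- arXiv:1811.07327 — 4 statements merged into one kernel-verified Lean document; each statement's English description precedes it below -/
import Mathlib

section
/- Let G be a graph and k ≥ 2. In any edge-minimal family of k 2-matchings whose union covers all vertices of G, no 2-matching of the family contains an even circuit as a component; moreover, the edge set of such an edge-minimal family is also the union of k matchings covering all vertices. -/
/-- `M` is a matching of `G`: a set of edges of `G` that are pairwise vertex-disjoint. -/
def IsMatching {V : Type*} (G : SimpleGraph V) (M : Finset (Sym2 V)) : Prop :=
  ↑M ⊆ G.edgeSet ∧ (M : Set (Sym2 V)).Pairwise fun e f => ∀ v : V, ¬(v ∈ e ∧ v ∈ f)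

/-- A vertex `v` is covered by an edge set `F` if some edge of `F` is incident to it. -/
def Covers {V : Type*} (F : Finset (Sym2 V)) (v : V) : Prop := ∃ e ∈ F, v ∈ e

instance {V : Type*} [DecidableEq V] (F : Finset (Sym2 V)) (v : V) : Decidable (Covers F v) :=
  inferInstanceAs (Decidable (∃ e ∈ F, v ∈ e))

/-- A stable (independent) set of vertices. -/
def IsStable {V : Type*} (G : SimpleGraph V) (S : Finset V) : Prop :=
  ∀ u ∈ S, ∀ v ∈ S, ¬ G.Adj u v

/-- The external neighborhood `N(S)`. -/
def nbr {V : Type*} [Fintype V] [DecidableEq V] (G : SimpleGraph V) [DecidableRel G.Adj]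
    (S : Finset V) : Finset V :=
  Finset.univ.filter fun w => w ∉ S ∧ ∃ u ∈ S, G.Adj u w

/-- degree of a vertex in an edge set -/
def degF {V : Type*} [DecidableEq V] (F : Finset (Sym2 V)) (v : V) : ℕ :=
  (F.filter fun e => v ∈ e).card

/-- `F` is a 2-matching of `G`: a vertex-disjoint collection of edges and circuits.
Equivalently, all degrees are at most 2 and any edge having an endpoint of degree 1
has both endpoints of degree 1 (so components are single edges or circuits). -/
def Is2Matching {V : Type*} [DecidableEq V] (G : SimpleGraph V) (F : Finset (Sym2 V)) : Prop :=
  ↑F ⊆ G.edgeSet ∧ (∀ v : V, degF F v ≤ 2) ∧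
    ∀ e ∈ F, ∀ u : V, u ∈ e → degF F u = 1 → ∀ w ∈ e, degF F w = 1
/-- the component of `v` in the graph spanned by the edge set `F` is an even circuit:
every vertex of the component has degree 2 in `F` and the component has an even
number of vertices (for a circuit, the numbers of vertices and edges coincide). -/
def HasEvenCircuitComponentAt {V : Type*} [DecidableEq V] (F : Finset (Sym2 V)) (v : V) : Prop :=
  Covers F v ∧
    (∀ w : V, (SimpleGraph.fromEdgeSet (↑F : Set (Sym2 V))).Reachable v w → degF F w = 2) ∧
    Even {w : V | (SimpleGraph.fromEdgeSet (↑F : Set (Sym2 V))).Reachable v w}.ncard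


set_option linter.unusedSectionVars false

section Machinery

open Finset SimpleGraph

variable {V : Type*} [DecidableEq V]

variable {V : Type*} [DecidableEq V]


/-- graph spanned by an edge finset -/
abbrev Gf (F : Finset (Sym2 V)) : SimpleGraph V := SimpleGraph.fromEdgeSet (↑F : Set (Sym2 V))

lemma covers_iff_degF_pos (F : Finset (Sym2 V)) (v : V) : Covers F v ↔ 0 < degF F v := by
  unfold Covers degF
  rw [Finset.card_pos]
  constructor
  · rintro ⟨e, he, hv⟩; exact ⟨e, Finset.mem_filter.2 ⟨he, hv⟩⟩
  · rintro ⟨e, he⟩; rw [Finset.mem_filter] at he; exact ⟨e, he.1, he.2⟩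

lemma degF_mono {F F' : Finset (Sym2 V)} (h : F ⊆ F') (v : V) : degF F v ≤ degF F' v :=
  Finset.card_le_card (Finset.filter_subset_filter _ h)

lemma covers_mono {F F' : Finset (Sym2 V)} (h : F ⊆ F') {v : V} : Covers F v → Covers F' v := by
  rintro ⟨e, he, hv⟩; exact ⟨e, h he, hv⟩

lemma mem_rep {e : Sym2 V} (hd : ¬e.IsDiag) {v : V} (hv : v ∈ e) : ∃ c, c ≠ v ∧ e = s(v, c) := by
  induction e with
  | _ x y =>
    rw [Sym2.mem_iff] at hv
    rcases hv with rfl | rfl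
    · exact ⟨y, fun h => hd (by simp [h]), rfl⟩
    · exact ⟨x, fun h => hd (by simp [h]), by rw [Sym2.eq_swap]⟩

lemma filter_erase' (F : Finset (Sym2 V)) (e : Sym2 V) (p : Sym2 V → Prop) [DecidablePred p] :
    (F.erase e).filter p = (F.filter p).erase e := by
  ext f; simp only [Finset.mem_filter, Finset.mem_erase]; tauto

lemma degF_erase_mem {F : Finset (Sym2 V)} {e : Sym2 V} (he : e ∈ F) {v : V} (hv : v ∈ e) :
    degF (F.erase e) v = degF F v - 1 := by
  unfold degF
  rw [filter_erase', Finset.card_erase_of_mem (Finset.mem_filter.2 ⟨he, hv⟩)]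

lemma degF_erase_notMem {F : Finset (Sym2 V)} {e : Sym2 V} {v : V} (hv : v ∉ e) :
    degF (F.erase e) v = degF F v := by
  unfold degF
  rw [filter_erase', Finset.erase_eq_of_notMem]
  intro h
  exact hv (Finset.mem_filter.1 h).2

lemma adj_of_mem {F : Finset (Sym2 V)} {x y : V} (h : s(x,y) ∈ F) (hxy : x ≠ y) :
    (Gf F).Adj x y := by
  rw [SimpleGraph.fromEdgeSet_adj]
  exact ⟨by exact_mod_cast h, hxy⟩

lemma covers_of_reachable {F : Finset (Sym2 V)} {v w : V} (h : (Gf F).Reachable v w)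
    (hw : w ≠ v) : Covers F w := by
  obtain ⟨p⟩ := h
  cases hp : p.reverse with
  | nil => exact absurd rfl hw
  | cons hadj q =>
    rw [SimpleGraph.fromEdgeSet_adj] at hadj
    exact ⟨_, by exact_mod_cast hadj.1, Sym2.mem_mk_left _ _⟩

lemma edge_unique_of_degF_one {F : Finset (Sym2 V)} {v : V} (h : degF F v = 1)
    {e f : Sym2 V} (he : e ∈ F) (hve : v ∈ e) (hf : f ∈ F) (hvf : v ∈ f) : e = f := by
  unfold degF at h
  obtain ⟨g, hg⟩ := Finset.card_eq_one.1 h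
  have h1 : e ∈ F.filter (fun e => v ∈ e) := Finset.mem_filter.2 ⟨he, hve⟩
  have h2 : f ∈ F.filter (fun e => v ∈ e) := Finset.mem_filter.2 ⟨hf, hvf⟩
  rw [hg, Finset.mem_singleton] at h1 h2
  rw [h1, h2]

lemma two_edges_of_degF_two {F : Finset (Sym2 V)} {v : V} (h : degF F v = 2) :
    ∃ e f, e ≠ f ∧ e ∈ F ∧ f ∈ F ∧ v ∈ e ∧ v ∈ f := by
  obtain ⟨e, f, hef, hgg⟩ := Finset.card_eq_two.1 h
  have h1 : e ∈ F.filter (fun e => v ∈ e) := by rw [hgg]; simp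
  have h2 : f ∈ F.filter (fun e => v ∈ e) := by rw [hgg]; simp
  rw [Finset.mem_filter] at h1 h2
  exact ⟨e, f, hef, h1.1, h2.1, h1.2, h2.2⟩

/-! ### Walk lemmas -/

/-- degree-2 propagation along walks, for 2-matchings -/
lemma deg_two_propagate {F : Finset (Sym2 V)}
    (h3 : ∀ e ∈ F, ∀ u : V, u ∈ e → degF F u = 1 → ∀ w ∈ e, degF F w = 1)
    (hle : ∀ u : V, degF F u ≤ 2) :
    ∀ {x w : V}, degF F x = 2 → (Gf F).Walk x w → degF F w = 2 := by
  intro x w hx p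
  induction p with
  | nil => exact hx
  | cons hadj q ih =>
    rename_i u y z
    apply ih
    rw [SimpleGraph.fromEdgeSet_adj] at hadj
    have he : s(u,y) ∈ F := by exact_mod_cast hadj.1
    have hy1 : 0 < degF F y := (covers_iff_degF_pos F y).1 ⟨_, he, Sym2.mem_mk_right _ _⟩
    have hy2 : degF F y ≤ 2 := hle y
    rcases Nat.lt_or_ge (degF F y) 2 with hlt | hge
    · have : degF F y = 1 := by omega
      have := h3 _ he y (Sym2.mem_mk_right _ _) this u (Sym2.mem_mk_left _ _)
      omega
    · omega

/-- deleting the unique edge of a degree-1 vertex keeps reachability away from it -/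
lemma reach_erase_of_deg_one {F : Finset (Sym2 V)} {v a : V} (hdeg : degF F v = 1)
    (he : s(v,a) ∈ F) :
    ∀ (n : ℕ) (x w : V), x ≠ v → w ≠ v → ∀ p : (Gf F).Walk x w, p.length ≤ n →
      (Gf (F.erase s(v,a))).Reachable x w := by
  intro n
  induction n with
  | zero =>
    intro x w hx hw p hp
    have := SimpleGraph.Walk.eq_of_length_eq_zero (Nat.le_zero.1 hp)
    exact this ▸ SimpleGraph.Reachable.refl _
  | succ n ih =>
    intro x w hx hw p hp
    cases p with
    | nil => exact SimpleGraph.Reachable.refl _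
    | cons hadj q =>
      rename_i y
      by_cases hyv : y = v
      · subst hyv
        cases q with
        | nil => exact absurd rfl hw
        | cons hadj2 r =>
          rename_i z
          rw [SimpleGraph.fromEdgeSet_adj] at hadj hadj2
          have hxv : s(x,y) ∈ F := by exact_mod_cast hadj.1
          have hvz : s(y,z) ∈ F := by exact_mod_cast hadj2.1
          have hxz : s(x,y) = s(y,z) :=
            edge_unique_of_degF_one hdeg hxv (Sym2.mem_mk_right _ _) hvz (Sym2.mem_mk_left _ _)
          have hzv : z ≠ y := hadj2.2.symm
          have hxez : x = z := by
            rw [Sym2.eq_iff] at hxz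
            rcases hxz with ⟨h1, _⟩ | ⟨h1, -⟩
            · exact absurd h1 hx
            · exact h1
          have hlen : r.length ≤ n := by
            simp only [SimpleGraph.Walk.length_cons] at hp; omega
          exact hxez ▸ ih z w hzv hw r hlen
      · rw [SimpleGraph.fromEdgeSet_adj] at hadj
        have hxy : s(x,y) ∈ F := by exact_mod_cast hadj.1
        have hne : s(x,y) ≠ s(v,a) := by
          intro hcon
          have : v ∈ s(x,y) := by rw [hcon]; exact Sym2.mem_mk_left _ _
          rw [Sym2.mem_iff] at this
          rcases this with h | h
          · exact hx h.symm
          · exact hyv h.symm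
        have hadj' : (Gf (F.erase s(v,a))).Adj x y := by
          rw [SimpleGraph.fromEdgeSet_adj]
          exact ⟨by exact_mod_cast Finset.mem_erase.2 ⟨hne, hxy⟩, hadj.2⟩
        have hlen : q.length ≤ n := by
          simp only [SimpleGraph.Walk.length_cons] at hp; omega
        exact hadj'.reachable.trans (ih y w hyv hw q hlen)

lemma reach_mono {F F' : Finset (Sym2 V)} (h : F ⊆ F') {x w : V}
    (hr : (Gf F).Reachable x w) : (Gf F').Reachable x w := by
  apply SimpleGraph.Reachable.mono _ hr
  apply SimpleGraph.fromEdgeSet_mono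
  exact_mod_cast h

/-- if the two endpoints of a deleted edge remain connected, reachability is preserved -/
lemma reach_erase_of_reach {F : Finset (Sym2 V)} {p q : V}
    (hpq : (Gf (F.erase s(p,q))).Reachable p q) :
    ∀ {x w : V}, (Gf F).Reachable x w → (Gf (F.erase s(p,q))).Reachable x w := by
  intro x w hr
  obtain ⟨wk⟩ := hr
  induction wk with
  | nil => exact SimpleGraph.Reachable.refl _
  | cons hadj q' ih =>
    rename_i u y z
    refine SimpleGraph.Reachable.trans ?_ ih
    rw [SimpleGraph.fromEdgeSet_adj] at hadj
    have huy : s(u,y) ∈ F := by exact_mod_cast hadj.1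
    by_cases heq : s(u,y) = s(p,q)
    · rw [Sym2.eq_iff] at heq
      rcases heq with ⟨rfl, rfl⟩ | ⟨rfl, rfl⟩
      · exact hpq
      · exact hpq.symm
    · exact (adj_of_mem (Finset.mem_erase.2 ⟨heq, huy⟩) hadj.2).reachable

/-! ### Handshake -/

lemma even_sum_degF {F : Finset (Sym2 V)} (hnd : ∀ e ∈ F, ¬ e.IsDiag) (C : Finset V)
    (hC : ∀ f ∈ F, ∀ x y : V, f = s(x,y) → (x ∈ C ↔ y ∈ C)) :
    Even (∑ w ∈ C, degF F w) := by
  have hrw : ∀ w, degF F w = ∑ f ∈ F, if w ∈ f then 1 else 0 := by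
    intro w; unfold degF; rw [Finset.card_filter]
  simp_rw [hrw]
  rw [Finset.sum_comm]
  apply Finset.even_sum
  intro f hf
  have : (∑ w ∈ C, if w ∈ f then 1 else 0) = (C.filter (fun w => w ∈ f)).card := by
    rw [Finset.card_filter]
  rw [this]
  induction f with
  | _ x y =>
    have hxy : x ≠ y := fun h => hnd _ hf (by simp [h])
    by_cases hx : x ∈ C
    · have hy : y ∈ C := (hC _ hf x y rfl).1 hx
      have : C.filter (fun w => w ∈ s(x,y)) = {x, y} := by
        ext w
        simp only [Finset.mem_filter, Sym2.mem_iff, Finset.mem_insert, Finset.mem_singleton]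
        constructor
        · tauto
        · rintro (rfl | rfl) <;> simp [hx, hy]
      rw [this, Finset.card_insert_of_notMem (by simp [hxy]), Finset.card_singleton]
      exact ⟨1, rfl⟩
    · have hy : y ∉ C := fun h => hx ((hC _ hf x y rfl).2 h)
      have h0 : C.filter (fun w => w ∈ s(x,y)) = ∅ := by
        ext w
        simp only [Finset.mem_filter, Sym2.mem_iff, Finset.notMem_empty, iff_false]
        rintro ⟨hw, rfl | rfl⟩ <;> tauto
      rw [h0, Finset.card_empty]
      exact Even.zero

/-! ### Path matching lemma -/

def PairDisj (M : Finset (Sym2 V)) : Prop :=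
  (M : Set (Sym2 V)).Pairwise fun e f => ∀ v : V, ¬(v ∈ e ∧ v ∈ f)

lemma pairDisj_empty : PairDisj (∅ : Finset (Sym2 V)) := by
  unfold PairDisj; simp

lemma path_matching : ∀ (n : ℕ) (F : Finset (Sym2 V)), F.card ≤ n →
    (∀ e ∈ F, ¬ e.IsDiag) → (∀ u, degF F u ≤ 2) → ∀ v, degF F v ≤ 1 →
    ∃ M, M ⊆ F ∧ PairDisj M ∧
      ∀ w, Covers F w → w ≠ v → (Gf F).Reachable v w → Covers M w := by
  intro n
  induction n with
  | zero =>
    intro F hcard _ _ v _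
    have : F = ∅ := Finset.card_eq_zero.1 (Nat.le_zero.1 hcard)
    subst this
    exact ⟨∅, Finset.Subset.refl _, pairDisj_empty, fun w hw _ _ => by
      obtain ⟨e, he, _⟩ := hw; exact absurd he (Finset.notMem_empty e)⟩
  | succ n ih =>
    intro F hcard hnd hdeg v hv
    rcases Nat.lt_or_ge 0 (degF F v) with hpos | hzero
    swap
    · -- degree 0 : v is isolated
      refine ⟨∅, Finset.empty_subset _, pairDisj_empty, fun w hw hwv hr => ?_⟩
      have : Covers F v := covers_of_reachable hr.symm (Ne.symm hwv)
      rw [covers_iff_degF_pos] at this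
      omega
    -- degree 1
    have hdv : degF F v = 1 := by omega
    obtain ⟨g, hg⟩ := Finset.card_eq_one.1 hdv
    have hgF : g ∈ F ∧ v ∈ g := by
      have : g ∈ F.filter (fun e => v ∈ e) := by rw [hg]; simp
      exact ⟨(Finset.mem_filter.1 this).1, (Finset.mem_filter.1 this).2⟩
    obtain ⟨a, hav, hge⟩ := mem_rep (hnd g hgF.1) hgF.2
    have he : s(v,a) ∈ F := hge ▸ hgF.1
    set F' := F.erase s(v,a) with hF'
    have hF'sub : F' ⊆ F := Finset.erase_subset _ _
    have hF'card : F'.card ≤ n := by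
      rw [hF', Finset.card_erase_of_mem he]
      omega
    have hnd' : ∀ e ∈ F', ¬ e.IsDiag := fun e hef => hnd e (hF'sub hef)
    have hdeg' : ∀ u, degF F' u ≤ 2 := fun u => le_trans (degF_mono hF'sub u) (hdeg u)
    have hdega : degF F' a ≤ 1 := by
      rw [hF', degF_erase_mem he (Sym2.mem_mk_right _ _)]
      have := hdeg a; omega
    obtain ⟨M', hM'sub, hM'pd, hM'cov⟩ := ih F' hF'card hnd' hdeg' a hdega
    have hreach : ∀ w, w ≠ v → (Gf F).Reachable v w → (Gf F').Reachable a w := by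
      intro w hwv hr
      have hva : (Gf F).Adj v a := adj_of_mem he (Ne.symm hav)
      have hrw : (Gf F).Reachable a w := (hva.symm.reachable).trans hr
      obtain ⟨p⟩ := hrw
      exact reach_erase_of_deg_one hdv he p.length a w hav hwv p (le_refl _)
    have hcov' : ∀ w, w ≠ v → w ≠ a → Covers F w → Covers F' w := by
      rintro w hwv hwa ⟨f, hf, hwf⟩
      refine ⟨f, Finset.mem_erase.2 ⟨?_, hf⟩, hwf⟩
      rintro rfl
      rw [Sym2.mem_iff] at hwf
      tauto
    by_cases hMa : Covers M' a
    · refine ⟨M', hM'sub.trans hF'sub, hM'pd, fun w hcw hwv hr => ?_⟩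
      by_cases hwa : w = a
      · exact hwa ▸ hMa
      · exact hM'cov w (hcov' w hwv hwa hcw) hwa (hreach w hwv hr)
    · refine ⟨insert s(v,a) M', Finset.insert_subset he (hM'sub.trans hF'sub), ?_, ?_⟩
      · unfold PairDisj
        rw [Finset.coe_insert]
        rw [Set.pairwise_insert]
        refine ⟨hM'pd, fun f hfM' hne => ?_⟩
        have key : ∀ u : V, ¬(u ∈ s(v,a) ∧ u ∈ f) := by
          rintro u ⟨hue, huf⟩
          rw [Sym2.mem_iff] at hue
          rcases hue with rfl | rfl
          · -- u = v : f would be a second edge at v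
            have hfF : f ∈ F := hF'sub (hM'sub hfM')
            have : f ∈ F.filter (fun e => u ∈ e) := Finset.mem_filter.2 ⟨hfF, huf⟩
            rw [hg] at this
            rw [Finset.mem_singleton] at this
            have : f = s(u,a) := this.trans hge
            have : f ∉ F' := by rw [this]; simp [hF']
            exact this (hM'sub hfM')
          · exact hMa ⟨f, hfM', huf⟩
        exact ⟨key, fun u ⟨h1, h2⟩ => key u ⟨h2, h1⟩⟩
      · intro w hcw hwv hr
        by_cases hwa : w = a
        · exact ⟨s(v,a), Finset.mem_insert_self _ _, by simp [hwa]⟩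
        · exact covers_mono (Finset.subset_insert _ _)
            (hM'cov w (hcov' w hwv hwa hcw) hwa (hreach w hwv hr))

/-! ### Circuit matching lemma -/

lemma cyc_matching [Fintype V] (F : Finset (Sym2 V)) (hnd : ∀ e ∈ F, ¬ e.IsDiag)
    (hdeg : ∀ u, degF F u ≤ 2) (v : V)
    (hcomp : ∀ w, (Gf F).Reachable v w → degF F w = 2)
    {e : Sym2 V} (he : e ∈ F) (hve : v ∈ e) :
    ∃ M, M ⊆ F.erase e ∧ PairDisj M ∧ (∀ f ∈ M, ∀ u ∈ f, (Gf F).Reachable v u) ∧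
      ∀ w, w ≠ v → (Gf F).Reachable v w → Covers M w := by
  classical
  obtain ⟨a, hav, hea⟩ := mem_rep (hnd e he) hve
  subst hea
  set F' := F.erase s(v,a) with hF'def
  have hF'sub : F' ⊆ F := Finset.erase_subset _ _
  have hnd' : ∀ f ∈ F', ¬ f.IsDiag := fun f hf => hnd f (hF'sub hf)
  have hdegv : degF F v = 2 := hcomp v (SimpleGraph.Reachable.refl _)
  have hva : (Gf F).Adj v a := adj_of_mem he (Ne.symm hav)
  have hdega : degF F a = 2 := hcomp a hva.reachable
  have hdegv' : degF F' v = 1 := by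
    rw [hF'def, degF_erase_mem he (Sym2.mem_mk_left _ _)]; omega
  have hdega' : degF F' a = 1 := by
    rw [hF'def, degF_erase_mem he (Sym2.mem_mk_right _ _)]; omega
  set C : Finset V := Finset.univ.filter (fun w => (Gf F').Reachable v w) with hCdef
  have hmemC : ∀ w, w ∈ C ↔ (Gf F').Reachable v w := by
    intro w; rw [hCdef, Finset.mem_filter]; simp
  have hclosed : ∀ f ∈ F', ∀ x y : V, f = s(x,y) → (x ∈ C ↔ y ∈ C) := by
    intro f hf x y hfe
    subst hfe
    have hxy : x ≠ y := fun h => hnd' _ hf (by simp [h])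
    have hadj : (Gf F').Adj x y := adj_of_mem hf hxy
    rw [hmemC, hmemC]
    exact ⟨fun h => h.trans hadj.reachable, fun h => h.trans hadj.symm.reachable⟩
  have heven := even_sum_degF hnd' C hclosed
  have hvC : v ∈ C := (hmemC v).2 (SimpleGraph.Reachable.refl _)
  have haC : a ∈ C := by
    by_contra haC
    have hsum : degF F' v + ∑ w ∈ C.erase v, degF F' w = ∑ w ∈ C, degF F' w :=
      Finset.add_sum_erase _ _ hvC
    have heven2 : Even (∑ w ∈ C.erase v, degF F' w) := by
      apply Finset.even_sum
      intro w hw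
      have hwv : w ≠ v := (Finset.mem_erase.1 hw).1
      have hwC : w ∈ C := (Finset.mem_erase.1 hw).2
      have hr' : (Gf F').Reachable v w := (hmemC w).1 hwC
      have hr : (Gf F).Reachable v w := reach_mono hF'sub hr'
      have hw2 : degF F w = 2 := hcomp w hr
      have hwa : w ≠ a := fun h => haC (h ▸ hwC)
      have hwe : w ∉ s(v,a) := by rw [Sym2.mem_iff]; tauto
      rw [hF'def, degF_erase_notMem hwe, hw2]
      exact ⟨1, rfl⟩
    rw [← hsum, hdegv'] at heven
    obtain ⟨m, hm⟩ := heven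
    obtain ⟨l, hl⟩ := heven2
    omega
  have hra : (Gf F').Reachable v a := (hmemC a).1 haC
  have htrans : ∀ w, (Gf F).Reachable v w → (Gf F').Reachable v w :=
    fun w hw => reach_erase_of_reach hra hw
  obtain ⟨M', hM'sub, hM'pd, hM'cov⟩ :=
    path_matching F'.card F' (le_refl _) hnd'
      (fun u => le_trans (degF_mono hF'sub u) (hdeg u)) v (by omega)
  refine ⟨M'.filter (fun f => ∃ u ∈ f, (Gf F).Reachable v u),
    (Finset.filter_subset _ _).trans hM'sub, ?_, ?_, ?_⟩
  · exact hM'pd.mono (by exact_mod_cast Finset.filter_subset _ _)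
  · intro f hf u hu
    obtain ⟨hfM', u0, hu0f, hr0⟩ := Finset.mem_filter.1 hf
    have hfF : f ∈ F := hF'sub (hM'sub hfM')
    obtain ⟨c, hcu0, hfe⟩ := mem_rep (hnd f hfF) hu0f
    subst hfe
    rw [Sym2.mem_iff] at hu
    rcases hu with rfl | rfl
    · exact hr0
    · exact hr0.trans (adj_of_mem hfF (Ne.symm hcu0)).reachable
  · intro w hwv hr
    have hr' := htrans w hr
    have hcw : Covers F' w := covers_of_reachable hr' hwv
    obtain ⟨f, hfM', hwf⟩ := hM'cov w hcw hwv hr'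
    exact ⟨f, Finset.mem_filter.2 ⟨hfM', ⟨w, hwf, hr⟩⟩, hwf⟩

/-! ### 2-matching surgery -/


lemma eq_of_two_mem {f : Sym2 V} (hnd : ¬ f.IsDiag) {u u' : V} (hu : u ∈ f) (hu' : u' ∈ f)
    (hne : u' ≠ u) : f = s(u, u') := by
  obtain ⟨c, hcu, rfl⟩ := mem_rep hnd hu
  rw [Sym2.mem_iff] at hu'
  rcases hu' with rfl | rfl
  · exact absurd rfl hne
  · rfl

lemma nodiag_of_2m {G : SimpleGraph V} {A : Finset (Sym2 V)} (hA : Is2Matching G A) :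
    ∀ f ∈ A, ¬ f.IsDiag := fun f hf => G.not_isDiag_of_mem_edgeSet (hA.1 (by exact_mod_cast hf))

lemma degF_le_one_of_pairDisj {M : Finset (Sym2 V)} (h : PairDisj M) (u : V) :
    degF M u ≤ 1 := by
  apply Finset.card_le_one.2
  intro f hf g hg
  rw [Finset.mem_filter] at hf hg
  by_contra hne
  exact h (by exact_mod_cast hf.1) (by exact_mod_cast hg.1) hne u ⟨hf.2, hg.2⟩

lemma degF_union {A B : Finset (Sym2 V)} (h : Disjoint A B) (u : V) :
    degF (A ∪ B) u = degF A u + degF B u := by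
  unfold degF
  rw [Finset.filter_union]
  exact Finset.card_union_of_disjoint
    (Finset.disjoint_filter_filter h)

/-- main fix: remove an edge `e` from a 2-matching, losing coverage only
at a designated endpoint `x` of `e` (or, if `e` is an isolated edge, its endpoints). -/
lemma fix_edge [Fintype V] {G : SimpleGraph V} {A : Finset (Sym2 V)} (hA : Is2Matching G A)
    {e : Sym2 V} (he : e ∈ A) {x : V} (hx : x ∈ e) :
    ∃ A', A' ⊆ A ∧ e ∉ A' ∧ Is2Matching G A' ∧
      ∀ w, Covers A w → Covers A' w ∨ w = x ∨ (w ∈ e ∧ degF A w ≤ 1) := by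
  classical
  have hnd := nodiag_of_2m hA
  have hdx : 0 < degF A x := (covers_iff_degF_pos A x).1 ⟨e, he, hx⟩
  rcases Nat.lt_or_ge (degF A x) 2 with hlt | hge
  · -- x has degree 1, so e is an isolated edge
    have hdx1 : degF A x = 1 := by omega
    have hall : ∀ w ∈ e, degF A w = 1 := hA.2.2 e he x hx hdx1
    refine ⟨A.erase e, Finset.erase_subset _ _, Finset.notMem_erase _ _, ⟨?_, ?_, ?_⟩, ?_⟩
    · exact fun f hf => hA.1 (by
        simp only [Finset.coe_erase, Set.mem_diff] at hf
        exact_mod_cast hf.1)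
    · exact fun u => le_trans (degF_mono (Finset.erase_subset _ _) u) (hA.2.1 u)
    · intro f hf u hu hdu w hw
      have hfe : f ≠ e := (Finset.mem_erase.1 hf).1
      have hfA : f ∈ A := (Finset.mem_erase.1 hf).2
      have hnotine : ∀ z ∈ f, z ∉ e := by
        intro z hz hze
        have h1 : degF A z = 1 := hall z hze
        exact hfe (edge_unique_of_degF_one h1 hfA hz he hze)
      have hdu' : degF A u = 1 := by
        rw [← degF_erase_notMem (hnotine u hu)]; exact hdu
      have := hA.2.2 f hfA u hu hdu' w hw
      rw [degF_erase_notMem (hnotine w hw)]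
      exact this
    · rintro w ⟨f, hf, hwf⟩
      by_cases hfe : f = e
      · subst hfe
        exact Or.inr (Or.inr ⟨hwf, le_of_eq (hall w hwf)⟩)
      · exact Or.inl ⟨f, Finset.mem_erase.2 ⟨hfe, hf⟩, hwf⟩
  · -- x has degree 2 : circuit component
    have hdx2 : degF A x = 2 := le_antisymm (hA.2.1 x) hge
    have hcomp : ∀ w, (Gf A).Reachable x w → degF A w = 2 := by
      intro w hr
      obtain ⟨p⟩ := hr
      exact deg_two_propagate hA.2.2 hA.2.1 hdx2 p
    obtain ⟨M, hMsub, hMpd, hMcomp, hMcov⟩ :=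
      cyc_matching A hnd hA.2.1 x hcomp he hx
    set B : Finset (Sym2 V) :=
      A.filter (fun f => ¬ ∃ u ∈ f, (Gf A).Reachable x u) with hBdef
    have hBsub : B ⊆ A := Finset.filter_subset _ _
    have hMA : M ⊆ A := hMsub.trans (Finset.erase_subset _ _)
    have hBM : Disjoint B M := by
      rw [Finset.disjoint_left]
      intro f hfB hfM
      obtain ⟨c, d⟩ := f
      exact (Finset.mem_filter.1 hfB).2 ⟨c, Sym2.mem_mk_left _ _, hMcomp _ hfM c (Sym2.mem_mk_left _ _)⟩
    -- unreachable vertices keep their degree in B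
    have hBdeg : ∀ u, ¬ (Gf A).Reachable x u → degF B u = degF A u := by
      intro u hu
      unfold degF
      congr 1
      ext f
      simp only [hBdef, Finset.mem_filter]
      constructor
      · tauto
      · rintro ⟨hfA, huf⟩
        refine ⟨⟨hfA, ?_⟩, huf⟩
        rintro ⟨u', hu'f, hru'⟩
        by_cases huu : u' = u
        · exact hu (huu ▸ hru')
        · have hf : f = s(u, u') := eq_of_two_mem (hnd f hfA) huf hu'f huu
          exact hu (hru'.trans (adj_of_mem (hf ▸ hfA) (fun hc => huu hc.symm)).symm.reachable)
    have hMdeg0 : ∀ u, (Gf A).Reachable x u → degF B u = 0 := by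
      intro u hu
      unfold degF
      rw [Finset.card_eq_zero]
      rw [Finset.filter_eq_empty_iff]
      intro f hfB hufmem
      exact (Finset.mem_filter.1 hfB).2 ⟨u, hufmem, hu⟩
    have hMreach : ∀ u, 0 < degF M u → (Gf A).Reachable x u := by
      intro u hu
      obtain ⟨f, hf⟩ := Finset.card_pos.1 hu
      rw [Finset.mem_filter] at hf
      exact hMcomp f hf.1 u hf.2
    have hdegA' : ∀ u, degF (B ∪ M) u = degF B u + degF M u := fun u => degF_union hBM u
    refine ⟨B ∪ M, Finset.union_subset hBsub hMA, ?_, ⟨?_, ?_, ?_⟩, ?_⟩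
    · rw [Finset.mem_union]
      rintro (h | h)
      · exact (Finset.mem_filter.1 h).2 ⟨x, hx, SimpleGraph.Reachable.refl _⟩
      · exact (Finset.notMem_erase e A) (hMsub h)
    · intro f hf
      rw [Finset.mem_coe, Finset.mem_union] at hf
      rcases hf with h | h
      · exact hA.1 (by exact_mod_cast hBsub h)
      · exact hA.1 (by exact_mod_cast hMA h)
    · intro u
      rw [hdegA' u]
      by_cases hru : (Gf A).Reachable x u
      · have := hMdeg0 u hru
        have := degF_le_one_of_pairDisj hMpd u
        omega
      · have h1 := hBdeg u hru
        have h2 : degF M u = 0 := by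
          by_contra h
          exact hru (hMreach u (Nat.pos_of_ne_zero h))
        have := hA.2.1 u
        omega
    · intro f hf u hu hdu w hw
      rw [Finset.mem_union] at hf
      rcases hf with hfB | hfM
      · have hfA := hBsub hfB
        have hwreach : ¬ (Gf A).Reachable x w := by
          intro hc; exact (Finset.mem_filter.1 hfB).2 ⟨w, hw, hc⟩
        have hureach : ¬ (Gf A).Reachable x u := by
          intro hc; exact (Finset.mem_filter.1 hfB).2 ⟨u, hu, hc⟩
        have hMu : degF M u = 0 := by
          by_contra h
          exact hureach (hMreach u (Nat.pos_of_ne_zero h))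
        have hMw : degF M w = 0 := by
          by_contra h
          exact hwreach (hMreach w (Nat.pos_of_ne_zero h))
        have hduA : degF A u = 1 := by
          rw [hdegA' u, hMu, hBdeg u hureach] at hdu
          omega
        have := hA.2.2 f hfA u hu hduA w hw
        rw [hdegA' w, hMw, hBdeg w hwreach]
        omega
      · have hwreach : (Gf A).Reachable x w := hMcomp f hfM w hw
        have hMw : 0 < degF M w := (covers_iff_degF_pos M w).1 ⟨f, hfM, hw⟩
        have := degF_le_one_of_pairDisj hMpd w
        rw [hdegA' w, hMdeg0 w hwreach]
        omega
    · rintro w ⟨f, hf, hwf⟩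
      by_cases hrw : (Gf A).Reachable x w
      · by_cases hwx : w = x
        · exact Or.inr (Or.inl hwx)
        · obtain ⟨g, hg, hwg⟩ := hMcov w hwx hrw
          exact Or.inl ⟨g, Finset.mem_union_right _ hg, hwg⟩
      · left
        refine ⟨f, Finset.mem_union_left _ (Finset.mem_filter.2 ⟨hf, ?_⟩), hwf⟩
        rintro ⟨u', hu'f, hru'⟩
        by_cases huw : u' = w
        · exact hrw (huw ▸ hru')
        · have hfeq : f = s(w, u') := eq_of_two_mem (hnd f hf) hwf hu'f huw
          exact hrw (hru'.trans (adj_of_mem (hfeq ▸ hf) (fun hc => huw hc.symm)).symm.reachable)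

lemma degF_insert_notMem {A : Finset (Sym2 V)} {e : Sym2 V} {u : V} (hu : u ∉ e) :
    degF (insert e A) u = degF A u := by
  unfold degF
  rw [Finset.filter_insert, if_neg hu]

lemma degF_insert_mem {A : Finset (Sym2 V)} {e : Sym2 V} (heA : e ∉ A) {u : V} (hu : u ∈ e) :
    degF (insert e A) u = degF A u + 1 := by
  unfold degF
  rw [Finset.filter_insert, if_pos hu,
    Finset.card_insert_of_notMem (fun h => heA (Finset.mem_filter.1 h).1)]

lemma add_isolated {G : SimpleGraph V} {A : Finset (Sym2 V)} (hA : Is2Matching G A)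
    {x y : V} (hG : s(x,y) ∈ G.edgeSet) (hx : degF A x = 0) (hy : degF A y = 0) :
    Is2Matching G (insert s(x,y) A) := by
  have hxy : x ≠ y := fun h => G.not_isDiag_of_mem_edgeSet hG (by simp [h])
  have heA : s(x,y) ∉ A := by
    intro h
    have : 0 < degF A x := (covers_iff_degF_pos A x).1 ⟨_, h, Sym2.mem_mk_left _ _⟩
    omega
  have hmem_e : ∀ u : V, u ∈ s(x,y) → degF A u = 0 := by
    intro u hu; rw [Sym2.mem_iff] at hu; rcases hu with rfl | rfl <;> assumption
  refine ⟨?_, ?_, ?_⟩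
  · intro f hf
    rw [Finset.coe_insert, Set.mem_insert_iff] at hf
    rcases hf with rfl | hf
    · exact hG
    · exact hA.1 hf
  · intro u
    by_cases hu : u ∈ s(x,y)
    · rw [degF_insert_mem heA hu, hmem_e u hu]; omega
    · rw [degF_insert_notMem hu]; exact hA.2.1 u
  · intro f hf u hu hdu w hw
    rw [Finset.mem_insert] at hf
    rcases hf with rfl | hfA
    · rw [degF_insert_mem heA hw, hmem_e w hw]
    · have hune : u ∉ s(x,y) := by
        intro hc
        have h0 := hmem_e u hc
        have : 0 < degF A u := (covers_iff_degF_pos A u).1 ⟨f, hfA, hu⟩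
        omega
      have hwne : w ∉ s(x,y) := by
        intro hc
        have h0 := hmem_e w hc
        have : 0 < degF A w := (covers_iff_degF_pos A w).1 ⟨f, hfA, hw⟩
        omega
      rw [degF_insert_notMem hune] at hdu
      rw [degF_insert_notMem hwne]
      exact hA.2.2 f hfA u hu hdu w hw

/-! ### Main theorem: minimal families consist of matchings -/

lemma degF_zero_of_not_covers {F : Finset (Sym2 V)} {v : V} (h : ¬ Covers F v) :
    degF F v = 0 := by
  rw [covers_iff_degF_pos] at h; omega

lemma sup_ssubset_of_missing {k : ℕ} (H H' : Fin k → Finset (Sym2 V))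
    (hsub : ∀ j, H' j ⊆ Finset.univ.sup H) {e : Sym2 V}
    (he : e ∈ Finset.univ.sup H) (hnot : ∀ j, e ∉ H' j) :
    Finset.univ.sup H' ⊂ Finset.univ.sup H := by
  rw [Finset.ssubset_def]
  constructor
  · exact Finset.sup_le fun j _ => Finset.le_iff_subset.2 (hsub j)
  · intro hcon
    have : e ∈ Finset.univ.sup H' := hcon he
    rw [Finset.mem_sup] at this
    obtain ⟨j, _, hj⟩ := this
    exact hnot j hj

lemma two_le_degF_of_two_edges {F : Finset (Sym2 V)} {e f : Sym2 V} {v : V}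
    (hne : e ≠ f) (he : e ∈ F) (hf : f ∈ F) (hve : v ∈ e) (hvf : v ∈ f) :
    2 ≤ degF F v := by
  have hsub : ({e, f} : Finset (Sym2 V)) ⊆ F.filter (fun g => v ∈ g) := by
    intro g hg
    rw [Finset.mem_insert, Finset.mem_singleton] at hg
    rcases hg with rfl | rfl
    · exact Finset.mem_filter.2 ⟨he, hve⟩
    · exact Finset.mem_filter.2 ⟨hf, hvf⟩
  calc 2 = ({e, f} : Finset (Sym2 V)).card := by
        rw [Finset.card_insert_of_notMem (by simpa using hne), Finset.card_singleton]
    _ ≤ _ := Finset.card_le_card hsub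

theorem min_family_deg_le_one [Fintype V] {G : SimpleGraph V} {k : ℕ} (hk : 2 ≤ k)
    {H : Fin k → Finset (Sym2 V)}
    (h2m : ∀ i, Is2Matching G (H i)) (hcov : ∀ v : V, ∃ i, Covers (H i) v)
    (hmin : ∀ H' : Fin k → Finset (Sym2 V),
      ((∀ i, Is2Matching G (H' i)) ∧ ∀ v : V, ∃ i, Covers (H' i) v) →
      ¬ Finset.univ.sup H' ⊂ Finset.univ.sup H) :
    ∀ i v, degF (H i) v ≤ 1 := by
  classical
  intro i v
  by_contra hcon
  have hdv2 : degF (H i) v = 2 := le_antisymm ((h2m i).2.1 v) (by omega)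
  set F := H i with hFdef
  have hnd := nodiag_of_2m (h2m i)
  have hcompF : ∀ w, (Gf F).Reachable v w → degF F w = 2 := by
    intro w hr
    obtain ⟨p⟩ := hr
    exact deg_two_propagate (h2m i).2.2 (h2m i).2.1 hdv2 p
  obtain ⟨e1', e2', hne12, he1F, he2F, hve1, hve2⟩ := two_edges_of_degF_two hdv2
  obtain ⟨a, hav, he1a⟩ := mem_rep (hnd _ he1F) hve1
  obtain ⟨b, hbv, he2b⟩ := mem_rep (hnd _ he2F) hve2
  -- the degree of both cycle-neighbours of v is 2
  have hdeg_nbr : ∀ c : V, c ≠ v → s(v,c) ∈ F → degF F c = 2 := by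
    intro c hcv hcF
    exact hcompF c (adj_of_mem hcF (Ne.symm hcv)).reachable
  have hmemsup : ∀ {j : Fin k} {g : Sym2 V}, g ∈ H j → g ∈ Finset.univ.sup H :=
    fun {j} {g} hg => Finset.mem_sup.2 ⟨j, Finset.mem_univ _, hg⟩
  by_cases hCase1 : ∃ j : Fin k, j ≠ i ∧ Covers (H j) v
  · -- CASE 1 : v is covered by a foreign class
    obtain ⟨j, hji, f, hfHj, hvf⟩ := hCase1
    -- pick a cycle edge at v different from f
    have key : ∀ (est : Sym2 V) (c : V), est ∈ F → est ≠ f → est = s(v,c) → c ≠ v → False := by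
      intro est c hestF hestf hestc hcv
      have hvest : v ∈ est := by rw [hestc]; exact Sym2.mem_mk_left _ _
      have hcest : c ∈ est := by rw [hestc]; exact Sym2.mem_mk_right _ _
      have hdc2 : degF F c = 2 := hdeg_nbr c hcv (hestc ▸ hestF)
      -- designated exception for each class
      set d : Fin k → V := fun j' => if j' = i then v else c with hddef
      have hdest : ∀ j', d j' ∈ est := by
        intro j'; rw [hddef]; dsimp only; split
        · exact hvest
        · exact hcest
      have hex : ∀ j' : Fin k, ∃ A' : Finset (Sym2 V),
          (est ∈ H j' → ((A' ⊆ H j') ∧ (est ∉ A') ∧ Is2Matching G A' ∧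
            (∀ w, Covers (H j') w → Covers A' w ∨ w = d j' ∨ (w ∈ est ∧ degF (H j') w ≤ 1)))) ∧
          (est ∉ H j' → A' = H j') := by
        intro j'
        by_cases h : est ∈ H j'
        · obtain ⟨A', h1, h2, h3, h4⟩ := fix_edge (h2m j') h (hdest j')
          exact ⟨A', fun _ => ⟨h1, h2, h3, h4⟩, fun hc => absurd h hc⟩
        · exact ⟨H j', fun hc => absurd hc h, fun _ => rfl⟩
      choose H' hfix hkeep using hex
      have hestHi : est ∈ H i := hestF
      have hH'2m : ∀ j', Is2Matching G (H' j') := by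
        intro j'
        by_cases h : est ∈ H j'
        · exact ((hfix j') h).2.2.1
        · rw [hkeep j' h]; exact h2m j'
      -- c is covered by the new class i
      have hcovc : Covers (H' i) c := by
        have := ((hfix i) hestHi).2.2.2 c ⟨est, hestHi, hcest⟩
        rcases this with h | h | h
        · exact h
        · rw [hddef] at h; simp at h; exact absurd h hcv
        · rw [← hFdef] at h; omega
      -- v is covered by the new class j
      have hcovv : Covers (H' j) v := by
        by_cases h : est ∈ H j
        · have h2 := ((hfix j) h).2.2.2 v ⟨f, hfHj, hvf⟩
          rcases h2 with h2 | h2 | h2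
          · exact h2
          · rw [hddef] at h2; simp [hji] at h2; exact absurd h2.symm hcv
          · have : 2 ≤ degF (H j) v :=
              two_le_degF_of_two_edges (fun hc => hestf hc.symm) hfHj h hvf hvest
            omega
        · rw [hkeep j h]; exact ⟨f, hfHj, hvf⟩
      have hcovall : ∀ w : V, ∃ j', Covers (H' j') w := by
        intro w
        obtain ⟨j0, g, hgj0, hwg⟩ := hcov w
        by_cases h : est ∈ H j0
        · have h2 := ((hfix j0) h).2.2.2 w ⟨g, hgj0, hwg⟩
          rcases h2 with h2 | h2 | h2
          · exact ⟨j0, h2⟩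
          · rw [hddef] at h2; dsimp only at h2
            by_cases hji0 : j0 = i
            · rw [if_pos hji0] at h2; subst h2; exact ⟨j, hcovv⟩
            · rw [if_neg hji0] at h2; subst h2; exact ⟨i, hcovc⟩
          · have hw : w ∈ est := h2.1
            rw [hestc, Sym2.mem_iff] at hw
            rcases hw with rfl | rfl
            · exact ⟨j, hcovv⟩
            · exact ⟨i, hcovc⟩
        · rw [← hkeep j0 h] at hgj0; exact ⟨j0, ⟨g, hgj0, hwg⟩⟩
      apply hmin H' ⟨hH'2m, hcovall⟩
      apply sup_ssubset_of_missing
      · intro j'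
        by_cases h : est ∈ H j'
        · exact fun g hg => hmemsup (((hfix j') h).1 hg)
        · rw [hkeep j' h]; exact fun g hg => hmemsup hg
      · exact hmemsup hestF
      · intro j'
        by_cases h : est ∈ H j'
        · exact ((hfix j') h).2.1
        · rw [hkeep j' h]; exact h
    by_cases hfe1 : f = e1'
    · exact key e2' b he2F (fun hc => hne12 (hc.trans hfe1).symm) he2b hbv
    · exact key e1' a he1F (fun hc => hfe1 hc.symm) he1a hav
  · -- CASE 2 : v is not covered by any foreign class
    push_neg at hCase1
    have hforeign : ∀ j, j ≠ i → ∀ g : Sym2 V, v ∈ g → g ∉ H j := by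
      intro j hji g hvg hgj
      exact hCase1 j hji ⟨g, hgj, hvg⟩
    -- a helper for the one-class surgeries of Case 2
    have key2 : ∀ (est : Sym2 V) (c : V), est ∈ F → est = s(v,c) → c ≠ v →
        (∃ j, j ≠ i ∧ Covers (H j) c) → False := by
      intro est c hestF hestc hcv ⟨j, hji, hjc⟩
      have hcest : c ∈ est := by rw [hestc]; exact Sym2.mem_mk_right _ _
      obtain ⟨A', hsub', hnotin', h2m', hcov'⟩ := fix_edge (h2m i) hestF hcest
      set H' : Fin k → Finset (Sym2 V) := fun j' => if j' = i then A' else H j' with hH'def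
      have hH'2m : ∀ j', Is2Matching G (H' j') := by
        intro j'; rw [hH'def]; dsimp only; split
        · exact h2m'
        · exact h2m j'
      have hcovall : ∀ w : V, ∃ j', Covers (H' j') w := by
        intro w
        obtain ⟨j0, g, hgj0, hwg⟩ := hcov w
        by_cases hj0i : j0 = i
        · subst hj0i
          have h2 := hcov' w ⟨g, hgj0, hwg⟩
          rcases h2 with h2 | h2 | h2
          · exact ⟨j0, by rw [hH'def]; simpa using h2⟩
          · subst h2; exact ⟨j, by rw [hH'def]; simpa [hji] using hjc⟩
          · have hw : w ∈ est := h2.1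
            rw [hestc, Sym2.mem_iff] at hw
            rcases hw with rfl | rfl
            · rw [← hFdef] at h2; omega
            · have := hdeg_nbr w hcv (hestc ▸ hestF)
              rw [← hFdef] at h2; omega
        · exact ⟨j0, by rw [hH'def]; simpa [hj0i] using ⟨g, hgj0, hwg⟩⟩
      apply hmin H' ⟨hH'2m, hcovall⟩
      apply sup_ssubset_of_missing
      · intro j'; rw [hH'def]; dsimp only; split
        · exact fun g hg => hmemsup (hsub' hg)
        · exact fun g hg => hmemsup hg
      · exact hmemsup hestF
      · intro j'; rw [hH'def]; dsimp only; split
        · exact hnotin'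
        · rename_i hj'
          exact hforeign j' hj' est (by rw [hestc]; exact Sym2.mem_mk_left _ _)
    by_cases hCovA : ∃ j, j ≠ i ∧ Covers (H j) a
    · exact key2 e1' a he1F he1a hav hCovA
    by_cases hCovB : ∃ j, j ≠ i ∧ Covers (H j) b
    · exact key2 e2' b he2F he2b hbv hCovB
    -- CASE 2c : v, a, b all uncovered by foreign classes; add edge s(v,b) to a foreign class
    push_neg at hCovA hCovB
    obtain ⟨j1, hj1i⟩ := Fintype.exists_ne_of_one_lt_card (by simp; omega) i
    obtain ⟨A', hsub', hnotin', h2m', hcov'⟩ := fix_edge (h2m i) he1F hve1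
    set H' : Fin k → Finset (Sym2 V) :=
      fun j' => if j' = i then A' else if j' = j1 then insert e2' (H j1) else H j' with hH'def
    have hvb : degF (H j1) v = 0 :=
      degF_zero_of_not_covers (hCase1 j1 hj1i)
    have hbb : degF (H j1) b = 0 :=
      degF_zero_of_not_covers (fun hc => (hCovB j1 hj1i) hc)
    have hins : Is2Matching G (insert e2' (H j1)) := by
      rw [he2b]
      refine add_isolated (h2m j1) ((h2m i).1 ?_) hvb hbb
      rw [← he2b]
      exact_mod_cast he2F
    have hH'2m : ∀ j', Is2Matching G (H' j') := by
      intro j'; rw [hH'def]; dsimp only; split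
      · exact h2m'
      · split
        · exact hins
        · exact h2m j'
    have hcovv' : Covers (H' j1) v := by
      rw [hH'def]; dsimp only; rw [if_neg hj1i, if_pos rfl]
      exact ⟨e2', Finset.mem_insert_self _ _, hve2⟩
    have hcovall : ∀ w : V, ∃ j', Covers (H' j') w := by
      intro w
      obtain ⟨j0, g, hgj0, hwg⟩ := hcov w
      by_cases hj0i : j0 = i
      · subst hj0i
        have h2 := hcov' w ⟨g, hgj0, hwg⟩
        rcases h2 with h2 | h2 | h2
        · exact ⟨j0, by rw [hH'def]; simpa using h2⟩
        · subst h2; exact ⟨j1, hcovv'⟩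
        · have hw : w ∈ e1' := h2.1
          rw [he1a, Sym2.mem_iff] at hw
          rcases hw with rfl | rfl
          · rw [← hFdef] at h2; omega
          · have := hdeg_nbr w hav (he1a ▸ he1F)
            rw [← hFdef] at h2; omega
      · refine ⟨j0, ?_⟩
        rw [hH'def]; dsimp only; rw [if_neg hj0i]
        split
        · exact ⟨g, Finset.mem_insert_of_mem (by rename_i hh; exact hh ▸ hgj0), hwg⟩
        · exact ⟨g, hgj0, hwg⟩
    apply hmin H' ⟨hH'2m, hcovall⟩
    apply sup_ssubset_of_missing
    · intro j'; rw [hH'def]; dsimp only; split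
      · exact fun g hg => hmemsup (hsub' hg)
      · split
        · intro g hg
          rw [Finset.mem_insert] at hg
          rcases hg with rfl | hg
          · exact hmemsup he2F
          · exact hmemsup hg
        · exact fun g hg => hmemsup hg
    · exact hmemsup he1F
    · intro j'; rw [hH'def]; dsimp only; split
      · exact hnotin'
      · split
        · rw [Finset.mem_insert]
          rintro (h | h)
          · exact hne12 h
          · exact hforeign j1 hj1i e1' (he1a ▸ Sym2.mem_mk_left _ _) h
        · rename_i hj' _
          exact hforeign j' hj' e1' (he1a ▸ Sym2.mem_mk_left _ _)

end Machinery

theorem stmt_14 {V : Type*} [Fintype V] [DecidableEq V] (G : SimpleGraph V)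
    (k : ℕ) (hk : 2 ≤ k) (H : Fin k → Finset (Sym2 V))
    (hH : (∀ i, Is2Matching G (H i)) ∧ ∀ v : V, ∃ i, Covers (H i) v)
    (hmin : ∀ H' : Fin k → Finset (Sym2 V),
      ((∀ i, Is2Matching G (H' i)) ∧ ∀ v : V, ∃ i, Covers (H' i) v) →
      ¬ Finset.univ.sup H' ⊂ Finset.univ.sup H) :
    (∀ i, ∀ v : V, ¬ HasEvenCircuitComponentAt (H i) v) ∧
      ∃ M : Fin k → Finset (Sym2 V),
        (∀ i, IsMatching G (M i)) ∧
        Finset.univ.sup M = Finset.univ.sup H ∧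
        ∀ v : V, ∃ i, Covers (M i) v := by
  obtain ⟨h2m, hcov⟩ := hH
  have hdeg1 : ∀ i v, degF (H i) v ≤ 1 := min_family_deg_le_one hk h2m hcov hmin
  constructor
  · intro i v hEC
    have h2 := hEC.2.1 v (SimpleGraph.Reachable.refl _)
    have := hdeg1 i v
    omega
  · refine ⟨H, fun i => ⟨(h2m i).1, ?_⟩, rfl, hcov⟩
    intro e he f hf hne u hu
    obtain ⟨hue, huf⟩ := hu
    have h2le : 2 ≤ degF (H i) u :=
      two_le_degF_of_two_edges hne (by exact_mod_cast he) (by exact_mod_cast hf) hue huf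
    have := hdeg1 i u
    omega
end

section
/- Let G be a graph and k ≥ 1. There exist k 2-star-packings of G whose union covers every vertex if and only if |S| ≤ 2k·|N(S)| for every stable set S of G. -/
/-- `F` is a 2-star-packing: each component is a star with 1 or 2 edges.
Equivalently all degrees are at most 2 and no edge joins two vertices of degree 2. -/
def Is2StarPacking {V : Type*} [DecidableEq V] (G : SimpleGraph V) (F : Finset (Sym2 V)) : Prop :=
  ↑F ⊆ G.edgeSet ∧ (∀ v : V, degF F v ≤ 2) ∧
    ∀ e ∈ F, ∀ u v : V, e = s(u, v) → degF F u = 1 ∨ degF F v = 1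

/-! Necessity: every vertex of a stable set `S` is covered through an edge to `N(S)`, and a
vertex of `N(S)` has degree at most `2` in each of the `k` packings.

Sufficiency: by Hall's theorem with capacities, the condition yields a map `f` sending every
vertex to a neighbour, with fibres of size at most `2k`. Growing stars greedily along `f` (hang
an uncovered vertex with no uncovered `f`-preimage below its image; once `f` permutes the
uncovered vertices, let any such `u` be the centre of a star with leaf `f u`) gives a spanning
star forest with at most `2k` leaves per star. Splitting the leaves of every star into `k` groups
of at most two gives the packings. -/

open Finset

theorem Finset.image_eq_of_subset_image {α : Type*} [DecidableEq α] {f : α → α} {s : Finset α}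
    (h : s ⊆ s.image f) : s.image f = s :=
  (eq_of_subset_of_card_le h card_image_le).symm

theorem Finset.injOn_of_subset_image {α : Type*} [DecidableEq α] {f : α → α} {s : Finset α}
    (h : s ⊆ s.image f) : Set.InjOn f s :=
  card_image_iff.mp (by rw [image_eq_of_subset_image h])

theorem exists_map_card_fiber_le_of_forall_card_le {ι α : Type*} [Fintype ι] [DecidableEq α]
    (t : ι → Finset α) (d : ℕ) (h : ∀ A : Finset ι, #A ≤ d * #(A.biUnion t)) :
    ∃ f : ι → α, (∀ i, f i ∈ t i) ∧ ∀ a, #{i | f i = a} ≤ d := by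
  -- Hall's theorem for the `d`-fold blow-up `i ↦ t i ×ˢ Fin d` of every target.
  have hall : ∀ A : Finset ι, #A ≤ #(A.biUnion fun i => t i ×ˢ (univ : Finset (Fin d))) := by
    intro A
    have hblow : A.biUnion (fun i => t i ×ˢ (univ : Finset (Fin d))) =
        A.biUnion t ×ˢ (univ : Finset (Fin d)) := by
      ext; simp
    simpa [hblow, mul_comm] using h A
  obtain ⟨F, hFinj, hFt⟩ := (all_card_le_biUnion_card_iff_exists_injective _).mp hall
  refine ⟨fun i => (F i).1, fun i => (mem_product.mp (hFt i)).1, fun a => ?_⟩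
  calc #{i | (F i).1 = a} ≤ #(univ : Finset (Fin d)) := by
        refine card_le_card_of_injOn (fun i => (F i).2) (fun _ _ => mem_coe.2 (mem_univ _)) ?_
        intro i hi j hj hij
        simp only [coe_filter, mem_univ, true_and, Set.mem_ofPred_eq] at hi hj
        exact hFinj (Prod.ext (hi.trans hj.symm) hij)
    _ = d := by simp

theorem exists_labelling_card_fiber_le {α : Type*} (s : Finset α) {m k : ℕ} (hk : 0 < k)
    (hs : #s ≤ m * k) : ∃ g : α → Fin k, ∀ i, #{x ∈ s | g x = i} ≤ m := by
  classical
  -- Number the elements of `s` and label each by its number modulo `k`.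
  let r : α → ℕ := fun x => if hx : x ∈ s then s.equivFin ⟨x, hx⟩ else 0
  have hr_lt : ∀ x ∈ s, r x < m * k := fun x hx => by
    simp only [r, dif_pos hx]
    exact (Fin.isLt _).trans_le hs
  have hr_inj : Set.InjOn r s := fun a ha b hb hab => by
    simp only [r, dif_pos (mem_coe.1 ha), dif_pos (mem_coe.1 hb)] at hab
    simpa using s.equivFin.injective (Fin.ext hab)
  refine ⟨fun x => ⟨r x % k, Nat.mod_lt _ hk⟩, fun i => ?_⟩
  calc #{x ∈ s | (⟨r x % k, _⟩ : Fin k) = i} ≤ #(range m) := by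
        refine card_le_card_of_injOn (fun x => r x / k) (fun x hx => ?_) fun a ha b hb hab => ?_
        · simp only [coe_filter, Set.mem_ofPred_eq] at hx
          exact mem_coe.2 (mem_range.2 (Nat.div_lt_of_lt_mul (by linarith [hr_lt x hx.1])))
        · simp only [coe_filter, Set.mem_ofPred_eq] at ha hb
          refine hr_inj ha.1 hb.1 ?_
          rw [← Nat.div_add_mod (r a) k, ← Nat.div_add_mod (r b) k, show r a / k = r b / k from hab,
            show r a % k = r b % k from Fin.val_eq_of_eq (ha.2.trans hb.2.symm)]
    _ = m := card_range m

section Graphs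

variable {V : Type*} [DecidableEq V]

theorem card_filter_mk_mem_le_degF (F : Finset (Sym2 V)) (S : Finset V) (w : V) :
    #{s ∈ S | s(s, w) ∈ F} ≤ degF F w := by
  refine card_le_card_of_injOn (fun s => s(s, w)) (fun s hs => ?_) fun a _ b _ hab => ?_
  · simp only [coe_filter, Set.mem_ofPred_eq] at hs ⊢
    exact ⟨hs.2, Sym2.mem_mk_right s w⟩
  · exact Sym2.congr_left.mp hab

theorem degF_image_mk_le (p : V → V) (T : Finset V) (x : V) :
    degF (T.image fun v => s(v, p v)) x ≤ #{v ∈ T | x = v ∨ x = p v} := by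
  unfold degF
  rw [filter_image]
  exact card_image_le.trans_eq (by simp [Sym2.mem_iff])

theorem degF_image_mk_le_one {p : V → V} (hp : ∀ v, p (p v) = p v) {T : Finset V} {x : V}
    (hx : p x ≠ x) :
    degF (T.image fun v => s(v, p v)) x ≤ 1 := by
  refine (degF_image_mk_le p T x).trans (card_le_one.2 fun a ha b hb => ?_)
  simp only [mem_filter] at ha hb
  have hfix : ∀ v, x ≠ p v := fun v hv => hx (hv ▸ hp v)
  exact (ha.2.resolve_right (hfix a)).symm.trans (hb.2.resolve_right (hfix b))

variable [Fintype V]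

section StableSets

variable (G : SimpleGraph V) [DecidableRel G.Adj]

theorem card_le_mul_card_biUnion_neighborFinset {d : ℕ} (hd : 1 ≤ d)
    (hstab : ∀ S : Finset V, IsStable G S → #S ≤ d * #(nbr G S)) (A : Finset V) :
    #A ≤ d * #(A.biUnion (G.neighborFinset ·)) := by
  set N := A.biUnion (G.neighborFinset ·)
  have hN : ∀ {u w}, u ∈ A → G.Adj u w → w ∈ N := fun hu huw =>
    mem_biUnion.2 ⟨_, hu, (G.mem_neighborFinset _ _).2 huw⟩
  -- `A \ N` is stable and its neighbours lie in `N \ A`; the rest of `A` lies in `N` itself.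
  have hstable : IsStable G (A \ N) := fun u hu v hv huv =>
    (mem_sdiff.1 hv).2 (hN (mem_sdiff.1 hu).1 huv)
  have hnbr : nbr G (A \ N) ⊆ N \ A := by
    intro w hw
    obtain ⟨-, u, hu, huw⟩ := (mem_filter.1 hw).2
    exact mem_sdiff.2 ⟨hN (mem_sdiff.1 hu).1 huw, fun hwA => (mem_sdiff.1 hu).2 (hN hwA huw.symm)⟩
  calc #A = #(A \ N) + #(A ∩ N) := (card_sdiff_add_card_inter A N).symm
    _ ≤ d * #(N \ A) + d * #(N ∩ A) := by
        gcongr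
        · exact (hstab _ hstable).trans (Nat.mul_le_mul_left d (card_le_card hnbr))
        · rw [inter_comm]; exact Nat.le_mul_of_pos_left _ hd
    _ = d * #N := by rw [← mul_add, card_sdiff_add_card_inter]

theorem exists_adj_map_card_fiber_le {d : ℕ} (hd : 1 ≤ d)
    (hstab : ∀ S : Finset V, IsStable G S → #S ≤ d * #(nbr G S)) :
    ∃ f : V → V, (∀ v, G.Adj v (f v)) ∧ ∀ w, #{v | f v = w} ≤ d := by
  obtain ⟨f, hf, hfib⟩ := exists_map_card_fiber_le_of_forall_card_le (G.neighborFinset ·) d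
    (card_le_mul_card_biUnion_neighborFinset G hd hstab)
  exact ⟨f, fun v => (G.mem_neighborFinset _ _).1 (hf v), hfib⟩

theorem card_le_of_starPackings_cover {k : ℕ} (H : Fin k → Finset (Sym2 V))
    (hH : ∀ i, Is2StarPacking G (H i)) (hcov : ∀ v, ∃ i, Covers (H i) v) {S : Finset V}
    (hS : IsStable G S) : #S ≤ 2 * k * #(nbr G S) := by
  have hcover : S ⊆ (univ ×ˢ nbr G S).biUnion fun x => {s ∈ S | s(s, x.2) ∈ H x.1} := by
    intro s hs
    obtain ⟨i, e, he, hse⟩ := hcov s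
    obtain ⟨w, rfl⟩ := Sym2.mem_iff_exists.mp hse
    have hsw : G.Adj s w := (hH i).1 he
    have hw : w ∈ nbr G S := mem_filter.2 ⟨mem_univ _, fun hwS => hS s hs w hwS hsw, s, hs, hsw⟩
    exact mem_biUnion.2 ⟨(i, w), mem_product.2 ⟨mem_univ _, hw⟩, mem_filter.2 ⟨hs, he⟩⟩
  calc #S ≤ ∑ x ∈ univ ×ˢ nbr G S, #{s ∈ S | s(s, x.2) ∈ H x.1} :=
        (card_le_card hcover).trans card_biUnion_le
    _ ≤ #(univ ×ˢ nbr G S) • 2 := sum_le_card_nsmul _ _ _ fun x _ =>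
        (card_filter_mk_mem_le_degF _ _ _).trans ((hH x.1).2.1 x.2)
    _ = 2 * k * #(nbr G S) := by simp [card_product]; ring

end StableSets

section StarPartition

def leavesOf (p : V → V) (c : V) : Finset V := {u | u ≠ c ∧ p u = c}

def uncovered (p : V → V) : Finset V := {v | p v = v ∧ leavesOf p v = ∅}

/-- A spanning star forest with at most `d` leaves per star, encoded by the map `p` sending every
vertex to the centre of its star; the centres are the fixed points of `p`. -/
structure IsStarPartition (G : SimpleGraph V) (d : ℕ) (p : V → V) : Prop where
  adj : ∀ v, p v ≠ v → G.Adj v (p v)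
  idem : ∀ v, p (p v) = p v
  leavesOf_nonempty : ∀ c, p c = c → (leavesOf p c).Nonempty
  card_leavesOf_le : ∀ c, #(leavesOf p c) ≤ d

/-- A partial star partition grown along `f`: the vertices not yet covered are trivial stars,
every centre keeps room for the uncovered vertices that `f` sends to it, and `f` never sends an
uncovered vertex to a leaf. -/
structure IsGreedyState (G : SimpleGraph V) (f : V → V) (d : ℕ) (p : V → V) : Prop where
  adj : ∀ v, p v ≠ v → G.Adj v (p v)
  idem : ∀ v, p (p v) = p v
  card_le : ∀ c, #(leavesOf p c) + #{u ∈ uncovered p | f u = c} ≤ d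
  map_uncovered : ∀ u ∈ uncovered p, p (f u) = f u

variable {G : SimpleGraph V} {f p : V → V} {d : ℕ} {u c v : V}

theorem mem_leavesOf : u ∈ leavesOf p c ↔ u ≠ c ∧ p u = c := by
  simp [leavesOf]

theorem mem_uncovered : v ∈ uncovered p ↔ p v = v ∧ leavesOf p v = ∅ := by
  simp [uncovered]

theorem leavesOf_update_of_ne (hu : p u = u) (hv : v ≠ c) :
    leavesOf (Function.update p u c) v = leavesOf p v := by
  ext x
  by_cases hx : x = u
  · subst hx
    simp only [mem_leavesOf, Function.update_self, hu]
    tauto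
  · simp [mem_leavesOf, Function.update_of_ne hx]

theorem leavesOf_update_self (hu : p u = u) (hcu : c ≠ u) :
    leavesOf (Function.update p u c) c = insert u (leavesOf p c) := by
  ext x
  by_cases hx : x = u
  · subst hx
    simp [mem_leavesOf, hcu.symm]
  · simp [mem_leavesOf, hx]

theorem uncovered_update (hu : p u = u) (hcu : c ≠ u) :
    uncovered (Function.update p u c) = uncovered p \ {u, c} := by
  ext v
  by_cases hvu : v = u
  · subst hvu
    simp [mem_uncovered, hcu]
  by_cases hvc : v = c
  · subst hvc
    simp [mem_uncovered, leavesOf_update_self hu hcu]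
  · simp [mem_uncovered, leavesOf_update_of_ne hu hvc, hvu, hvc]

theorem IsGreedyState.attach (hp : IsGreedyState G f d p) (hu : u ∈ uncovered p) (hcu : c ≠ u)
    (hadj : G.Adj u c) (hc : p c = c) (hptr : ∀ v ∈ uncovered p \ {u, c}, f v ≠ u)
    (hcap : #(leavesOf p c) + 1 + #{v ∈ uncovered p \ {u, c} | f v = c} ≤ d) :
    IsGreedyState G f d (Function.update p u c) := by
  obtain ⟨hpu, hleaves⟩ := mem_uncovered.1 hu
  have hU := uncovered_update hpu hcu
  refine ⟨fun v hv => ?_, fun v => ?_, fun c' => ?_, fun v hv => ?_⟩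
  · by_cases hvu : v = u
    · subst hvu; simpa using hadj
    · rw [Function.update_of_ne hvu] at hv ⊢; exact hp.adj v hv
  · by_cases hvu : v = u
    · subst hvu; simp [Function.update_of_ne hcu, hc]
    · have hpv : p v ≠ u := fun h =>
        (eq_empty_iff_forall_notMem.1 hleaves) v (mem_leavesOf.2 ⟨hvu, h⟩)
      simp [Function.update_of_ne hvu, Function.update_of_ne hpv, hp.idem]
  · rw [hU]
    by_cases hc' : c' = c
    · subst hc'
      have hu_leaf : u ∉ leavesOf p c' := fun h => hcu ((mem_leavesOf.1 h).2.symm.trans hpu)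
      rw [leavesOf_update_self hpu hcu, card_insert_of_notMem hu_leaf]
      exact hcap
    · rw [leavesOf_update_of_ne hpu hc']
      refine le_trans ?_ (hp.card_le c')
      gcongr
      exact sdiff_subset
  · rw [hU] at hv
    rw [Function.update_of_ne (hptr v hv)]
    exact hp.map_uncovered v (mem_sdiff.1 hv).1

theorem IsGreedyState.exists_step (hp : IsGreedyState G f d p) (hf : ∀ v, G.Adj v (f v))
    (hd : 2 ≤ d) (hne : (uncovered p).Nonempty) :
    ∃ q, IsGreedyState G f d q ∧ #(uncovered q) < #(uncovered p) := by
  set U := uncovered p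
  suffices ∃ u ∈ U, ∃ c, c ≠ u ∧ G.Adj u c ∧ p c = c ∧ (∀ v ∈ U \ {u, c}, f v ≠ u) ∧
      #(leavesOf p c) + 1 + #{v ∈ U \ {u, c} | f v = c} ≤ d by
    obtain ⟨u, hu, c, hcu, hadj, hc, hptr, hcap⟩ := this
    refine ⟨_, hp.attach hu hcu hadj hc hptr hcap, ?_⟩
    rw [uncovered_update (mem_uncovered.1 hu).1 hcu]
    refine lt_of_le_of_lt (card_le_card fun v hv => ?_) (card_erase_lt_of_mem hu)
    simp only [mem_sdiff, mem_insert, mem_singleton, not_or] at hv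
    exact mem_erase.2 ⟨hv.2.1, hv.1⟩
  by_cases hleaf : ∃ u ∈ U, ∀ v ∈ U, f v ≠ u
  · -- `u` has no uncovered preimage: hang it below `f u`, which is a centre or uncovered.
    obtain ⟨u, hu, hu_leaf⟩ := hleaf
    refine ⟨u, hu, f u, (hf u).ne', hf u, hp.map_uncovered u hu,
      fun v hv => hu_leaf v (mem_sdiff.1 hv).1, ?_⟩
    have hsub : {v ∈ U \ {u, f u} | f v = f u} ⊆ {v ∈ U | f v = f u}.erase u := by
      intro v hv
      simp only [mem_filter, mem_sdiff, mem_insert, mem_singleton, not_or] at hv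
      exact mem_erase.2 ⟨hv.1.2.1, mem_filter.2 ⟨hv.1.1, hv.2⟩⟩
    have hu_mem : u ∈ {v ∈ U | f v = f u} := mem_filter.2 ⟨hu, rfl⟩
    have hcard_sub := card_le_card hsub
    have hcard_erase := card_erase_add_one hu_mem
    have hcap : #(leavesOf p (f u)) + #{v ∈ U | f v = f u} ≤ d := hp.card_le (f u)
    omega
  · -- Otherwise `f` permutes `U`: make some `u₀ ∈ U` the centre of a star with the leaf `f u₀`.
    push Not at hleaf
    have hsurj : U ⊆ U.image f := fun u hu => by
      obtain ⟨v, hv, rfl⟩ := hleaf u hu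
      exact mem_image_of_mem f hv
    have hinj := injOn_of_subset_image hsurj
    obtain ⟨u₀, hu₀⟩ := hne
    have hw : f u₀ ∈ U := image_eq_of_subset_image hsurj ▸ mem_image_of_mem f hu₀
    obtain ⟨hpu₀, hleaves⟩ := mem_uncovered.1 hu₀
    refine ⟨f u₀, hw, u₀, (hf u₀).ne, (hf u₀).symm, hpu₀, fun v hv hfv => ?_, ?_⟩
    · have hvU := mem_sdiff.1 hv
      exact hvU.2 (by simp [hinj hvU.1 hu₀ hfv])
    · have hpre : #{v ∈ U \ {f u₀, u₀} | f v = u₀} ≤ 1 := card_le_one.2 fun a ha b hb => by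
        simp only [mem_filter, mem_sdiff] at ha hb
        exact hinj ha.1.1 hb.1.1 (ha.2.trans hb.2.symm)
      rw [hleaves, card_empty]
      omega

theorem IsGreedyState.isStarPartition (hp : IsGreedyState G f d p) (h : uncovered p = ∅) :
    IsStarPartition G d p where
  adj := hp.adj
  idem := hp.idem
  leavesOf_nonempty c hc := nonempty_iff_ne_empty.2 fun hl =>
    (eq_empty_iff_forall_notMem.1 h) c (mem_uncovered.2 ⟨hc, hl⟩)
  card_leavesOf_le c := (Nat.le_add_right _ _).trans (hp.card_le c)

theorem IsGreedyState.exists_isStarPartition (hp : IsGreedyState G f d p)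
    (hf : ∀ v, G.Adj v (f v)) (hd : 2 ≤ d) : ∃ q, IsStarPartition G d q := by
  induction hn : #(uncovered p) using Nat.strong_induction_on generalizing p with
  | _ n ih =>
    rcases (uncovered p).eq_empty_or_nonempty with h | h
    · exact ⟨p, hp.isStarPartition h⟩
    · obtain ⟨q, hq, hlt⟩ := hp.exists_step hf hd h
      exact ih _ (hn ▸ hlt) hq rfl

theorem isGreedyState_id (hfib : ∀ w, #{v | f v = w} ≤ d) : IsGreedyState G f d id where
  adj v hv := absurd rfl hv
  idem _ := rfl
  card_le c := by
    have hleaves : leavesOf (id : V → V) c = ∅ := by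
      ext u; simp [mem_leavesOf]
    rw [hleaves, card_empty, zero_add]
    exact (card_le_card (filter_subset_filter _ (subset_univ _))).trans (hfib c)
  map_uncovered _ _ := rfl

theorem exists_isStarPartition (hf : ∀ v, G.Adj v (f v)) (hd : 2 ≤ d)
    (hfib : ∀ w, #{v | f v = w} ≤ d) : ∃ p, IsStarPartition G d p :=
  (isGreedyState_id hfib).exists_isStarPartition hf hd

theorem IsStarPartition.exists_starPackings {k : ℕ} (hp : IsStarPartition G (2 * k) p)
    (hk : 0 < k) : ∃ H : Fin k → Finset (Sym2 V),
      (∀ i, Is2StarPacking G (H i)) ∧ ∀ v, ∃ i, Covers (H i) v := by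
  choose g hg using fun c =>
    exists_labelling_card_fiber_le (leavesOf p c) hk (hp.card_leavesOf_le c)
  let T : Fin k → Finset V := fun i => {v | p v ≠ v ∧ g (p v) v = i}
  have mem_T : ∀ {i v}, v ∈ T i ↔ p v ≠ v ∧ g (p v) v = i := by simp [T]
  let H : Fin k → Finset (Sym2 V) := fun i => (T i).image fun v => s(v, p v)
  have mk_mem_H : ∀ {i v}, v ∈ T i → s(v, p v) ∈ H i := fun hv => mem_image_of_mem _ hv
  have hleaf : ∀ {i v}, v ∈ T i → degF (H i) v = 1 := fun hv =>
    (degF_image_mk_le_one hp.idem (mem_T.1 hv).1).antisymm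
      (card_pos.2 ⟨_, mem_filter.2 ⟨mk_mem_H hv, Sym2.mem_mk_left _ _⟩⟩)
  have hdeg : ∀ i x, degF (H i) x ≤ 2 := by
    intro i x
    by_cases hx : p x = x
    · refine (degF_image_mk_le p (T i) x).trans ((card_le_card fun v hv => ?_).trans (hg x i))
      obtain ⟨hvT, rfl | rfl⟩ := mem_filter.1 hv
      · exact absurd hx (mem_T.1 hvT).1
      · exact mem_filter.2 ⟨mem_leavesOf.2 ⟨(mem_T.1 hvT).1.symm, rfl⟩, (mem_T.1 hvT).2⟩
    · exact (degF_image_mk_le_one hp.idem hx).trans one_le_two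
  refine ⟨H, fun i => ⟨?_, hdeg i, ?_⟩, fun v => ?_⟩
  · rintro e he
    obtain ⟨v, hv, rfl⟩ := mem_image.1 he
    exact hp.adj v (mem_T.1 hv).1
  · intro e he a b hab
    obtain ⟨v, hv, rfl⟩ := mem_image.1 he
    rcases Sym2.eq_iff.1 hab with ⟨rfl, -⟩ | ⟨rfl, -⟩
    · exact Or.inl (hleaf hv)
    · exact Or.inr (hleaf hv)
  · by_cases hv : p v = v
    · obtain ⟨u, hu⟩ := hp.leavesOf_nonempty v hv
      obtain ⟨huv, hpu⟩ := mem_leavesOf.1 hu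
      have huT : u ∈ T (g v u) := mem_T.2 ⟨hpu ▸ huv.symm, by rw [hpu]⟩
      exact ⟨g v u, _, mk_mem_H huT, hpu ▸ Sym2.mem_mk_right _ _⟩
    · exact ⟨g (p v) v, _, mk_mem_H (mem_T.2 ⟨hv, rfl⟩), Sym2.mem_mk_left _ _⟩

end StarPartition

end Graphs

theorem stmt_16 {V : Type*} [Fintype V] [DecidableEq V] (G : SimpleGraph V) [DecidableRel G.Adj]
    (k : ℕ) (hk : 1 ≤ k) :
    (∃ H : Fin k → Finset (Sym2 V),
        (∀ i, Is2StarPacking G (H i)) ∧ ∀ v : V, ∃ i, Covers (H i) v) ↔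
      ∀ S : Finset V, IsStable G S → S.card ≤ 2 * k * (nbr G S).card := by
  refine ⟨fun ⟨H, hH, hcov⟩ S hS => card_le_of_starPackings_cover G H hH hcov hS, fun hstab => ?_⟩
  obtain ⟨f, hf, hfib⟩ := exists_adj_map_card_fiber_le G (by omega) hstab
  obtain ⟨p, hp⟩ := exists_isStarPartition hf (by omega) hfib
  exact hp.exists_starPackings hk
end

section
/- Let G be a graph and k ≥ 1. There exist k path-packings of G whose union covers every vertex if and only if |S| ≤ 2k·|N(S)| for every stable set S of G. -/
/-- `F` is a path-packing: each component of `F` is a path. Equivalently, all degrees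
are at most 2 and the spanned graph is acyclic. -/
def IsPathPacking {V : Type*} [DecidableEq V] (G : SimpleGraph V) (F : Finset (Sym2 V)) : Prop :=
  ↑F ⊆ G.edgeSet ∧ (∀ v : V, degF F v ≤ 2) ∧
    (SimpleGraph.fromEdgeSet (↑F : Set (Sym2 V))).IsAcyclic

/-! Necessity: a vertex of a stable set `S` is covered by an edge of some packing whose other end
lies in `N(S)`, and a vertex of `N(S)` meets at most two edges of each of the `k` packings.

Sufficiency: take an edge set `F` of `G` with all degrees at most `2k` which covers as many
vertices as possible and, among those, has as few edges as possible. By minimality every edge of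
`F` has an end of degree one, so `F` is a star forest, and a star with at most `2k` edges splits
into `k` paths with at most two edges. By maximality `F` covers every vertex: otherwise alternating
chains from an uncovered vertex (an edge of `G` to a centre, an edge of `F` back to one of its
leaves, an edge of `G` to another centre, ...) only reach centres of degree exactly `2k`, and the
uncovered vertices together with the leaves of the reached centres form a stable set `S` with
`|S| > 2k |N(S)|`. -/

namespace PathPacking

open Finset SimpleGraph

variable {V : Type*} [DecidableEq V] {G : SimpleGraph V} {t : ℕ} {F F' : Finset (Sym2 V)}
  {e : Sym2 V} {v ℓ c' c : V}

lemma degF_pos (he : e ∈ F) (hv : v ∈ e) : 0 < degF F v :=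
  card_pos.mpr ⟨e, mem_filter.mpr ⟨he, hv⟩⟩

lemma covers_iff_degF_ne_zero : Covers F v ↔ degF F v ≠ 0 := by
  simp [Covers, degF]

lemma degF_mono (h : F ⊆ F') (v : V) : degF F v ≤ degF F' v :=
  card_le_card (filter_subset_filter _ h)

lemma eq_of_degF_le_one (h : degF F v ≤ 1) {e₁ e₂ : Sym2 V} (h₁ : e₁ ∈ F) (h₂ : e₂ ∈ F)
    (hv₁ : v ∈ e₁) (hv₂ : v ∈ e₂) : e₁ = e₂ :=
  card_le_one.mp h e₁ (mem_filter.mpr ⟨h₁, hv₁⟩) e₂ (mem_filter.mpr ⟨h₂, hv₂⟩)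

lemma degF_insert (he : e ∉ F) (v : V) :
    degF (insert e F) v = degF F v + if v ∈ e then 1 else 0 := by
  unfold degF
  rw [filter_insert]
  split_ifs
  · exact card_insert_of_notMem fun h => he (mem_of_mem_filter _ h)
  · rfl

lemma degF_erase_add (he : e ∈ F) (v : V) :
    degF (F.erase e) v + (if v ∈ e then 1 else 0) = degF F v := by
  rw [← degF_insert (notMem_erase e F), insert_erase he]

lemma covers_erase_of_two_le_degF (h : 2 ≤ degF F v) (e : Sym2 V) : Covers (F.erase e) v := by
  have : degF F v - 1 ≤ degF (F.erase e) v := by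
    unfold degF; rw [filter_erase]; exact pred_card_le_card_erase
  exact covers_iff_degF_ne_zero.mpr (by omega)

/-- Every component of `F` is a star: each edge has an end of degree one. -/
def IsStarForest (F : Finset (Sym2 V)) : Prop := ∀ e ∈ F, ∃ x ∈ e, degF F x = 1

lemma IsStarForest.mono (hF : IsStarForest F) (h : F' ⊆ F) : IsStarForest F' := by
  intro e he
  obtain ⟨x, hx, hdeg⟩ := hF e (h he)
  exact ⟨x, hx, le_antisymm (hdeg ▸ degF_mono h x) (degF_pos he hx)⟩

lemma IsStarForest.isAcyclic (hF : IsStarForest F) :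
    (fromEdgeSet (F : Set (Sym2 V))).IsAcyclic := by
  -- the edge at a leaf is a bridge
  refine isAcyclic_iff_forall_isBridge.mpr fun e he => ?_
  rw [edgeSet_fromEdgeSet] at he
  obtain ⟨x, hx, hdeg⟩ := hF e he.1
  obtain ⟨y, rfl⟩ := Sym2.mem_iff_exists.mp hx
  refine isBridge_iff_forall_walk_mem_edges.mpr fun p => ?_
  cases p with
  | nil => simp at he
  | cons hxz q =>
    have hxzF := (fromEdgeSet_adj _).mp hxz
    rw [Walk.edges_cons,
      eq_of_degF_le_one hdeg.le hxzF.1 he.1 (Sym2.mem_mk_left _ _) (Sym2.mem_mk_left _ _)]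
    exact List.mem_cons_self

lemma _root_.Finset.exists_injOn_lt_card {α : Type*} [DecidableEq α] (s : Finset α) :
    ∃ f : α → ℕ, (∀ a ∈ s, f a < #s) ∧ Set.InjOn f s :=
  ⟨fun a => s.toList.idxOf a,
    fun a ha => by simpa using List.idxOf_lt_length_iff.mpr (mem_toList.mpr ha),
    fun a ha _ _ h => (List.idxOf_inj (mem_toList.mpr ha)).mp h⟩

/-- Number the edges at each centre and colour an edge by half its number at its centre. -/
lemma IsStarForest.exists_cover_degF_le_two (hF : IsStarForest F) {k : ℕ}
    (hdeg : ∀ v, degF F v ≤ 2 * k) :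
    ∃ H : Fin k → Finset (Sym2 V), (∀ i, H i ⊆ F ∧ ∀ v, degF (H i) v ≤ 2) ∧
      ∀ e ∈ F, ∃ i, e ∈ H i := by
  classical
  choose lab hlt hinj using fun b : V => (F.filter (b ∈ ·)).exists_injOn_lt_card
  let H (i : Fin k) := F.filter fun e => ∃ a b, e = s(a, b) ∧ degF F a = 1 ∧ lab b e / 2 = i
  refine ⟨H, fun i => ⟨filter_subset _ _, fun v => ?_⟩, fun e he => ?_⟩
  · by_cases hv : degF F v ≤ 2
    · exact (degF_mono (filter_subset _ _) v).trans hv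
    -- `v` is not a leaf, so it is the centre of each of its edges in `H i`
    have hcentre : ∀ e ∈ (H i).filter (v ∈ ·), e ∈ F.filter (v ∈ ·) ∧ lab v e / 2 = i := by
      intro e he
      simp only [H, mem_filter] at he
      obtain ⟨⟨heF, a, b, rfl, ha, hi⟩, hve⟩ := he
      obtain rfl | rfl := Sym2.mem_iff.mp hve
      · omega
      · exact ⟨mem_filter.mpr ⟨heF, hve⟩, hi⟩
    calc degF (H i) v ≤ #({2 * i.val, 2 * i.val + 1} : Finset ℕ) :=
          card_le_card_of_injOn (lab v) (fun e he => by
              have := hcentre e he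
              simp only [coe_insert, coe_singleton, Set.mem_insert_iff, Set.mem_singleton_iff]
              omega)
            fun e₁ h₁ e₂ h₂ => hinj v (hcentre e₁ h₁).1 (hcentre e₂ h₂).1
      _ ≤ 2 := card_le_two
  · obtain ⟨a, ha, hadeg⟩ := hF e he
    obtain ⟨b, rfl⟩ := Sym2.mem_iff_exists.mp ha
    have : lab b s(a, b) < degF F b := hlt b s(a, b) (mem_filter.mpr ⟨he, Sym2.mem_mk_right _ _⟩)
    exact ⟨⟨lab b s(a, b) / 2, by have := hdeg b; omega⟩,
      mem_filter.mpr ⟨he, a, b, rfl, hadeg, rfl⟩⟩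

lemma card_le_sum_card_filter_meets {S : Finset V} {ι : Type*} [Fintype ι] [DecidableEq ι]
    {H : ι → Finset (Sym2 V)} (hHG : ∀ i, ↑(H i) ⊆ G.edgeSet) (hcov : ∀ v, ∃ i, Covers (H i) v)
    (hS : IsStable G S) : #S ≤ ∑ i, #{e ∈ H i | ∃ v ∈ S, v ∈ e} := by
  choose f g hgH hvg using hcov
  rw [card_eq_sum_card_fiberwise fun v _ => mem_coe.mpr (mem_univ (f v))]
  refine sum_le_sum fun i _ => card_le_card_of_injOn g (fun v hv => ?_) fun u hu v hv huv => ?_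
  · obtain ⟨hvS, rfl⟩ := mem_filter.mp hv
    exact mem_filter.mpr ⟨hgH v, v, hvS, hvg v⟩
  · obtain ⟨huS, rfl⟩ := mem_filter.mp hu
    obtain ⟨hvS, hfv⟩ := mem_filter.mp hv
    by_contra hne
    have hg : g v = s(u, v) := (Sym2.mem_and_mem_iff hne).mp ⟨huv ▸ hvg u, hvg v⟩
    have : G.Adj u v := by simpa [hg] using hHG (f v) (hgH v)
    exact hS u huS v hvS this

section Counting

variable [Fintype V]

lemma card_filter_meets_le [DecidableRel G.Adj] {S : Finset V} {H : Finset (Sym2 V)} {d : ℕ}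
    (hHG : ↑H ⊆ G.edgeSet) (hdeg : ∀ v, degF H v ≤ d) (hS : IsStable G S) :
    #{e ∈ H | ∃ v ∈ S, v ∈ e} ≤ d * #(nbr G S) := by
  have hsub : {e ∈ H | ∃ v ∈ S, v ∈ e} ⊆ (nbr G S).biUnion fun w => H.filter (w ∈ ·) := by
    intro e he
    obtain ⟨heH, v, hvS, hve⟩ := mem_filter.mp he
    obtain ⟨w, rfl⟩ := Sym2.mem_iff_exists.mp hve
    have hvw : G.Adj v w := hHG heH
    refine mem_biUnion.mpr ⟨w, ?_, mem_filter.mpr ⟨heH, Sym2.mem_mk_right _ _⟩⟩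
    simp only [nbr, mem_filter, mem_univ, true_and]
    exact ⟨fun hwS => hS v hvS w hwS hvw, v, hvS, hvw⟩
  calc #{e ∈ H | ∃ v ∈ S, v ∈ e} ≤ ∑ w ∈ nbr G S, degF H w :=
        (card_le_card hsub).trans card_biUnion_le
    _ ≤ ∑ _w ∈ nbr G S, d := sum_le_sum fun w _ => hdeg w
    _ = d * #(nbr G S) := by rw [sum_const, smul_eq_mul, mul_comm]

def nbrF (F : Finset (Sym2 V)) (c : V) : Finset V := univ.filter fun x => s(x, c) ∈ F

lemma card_nbrF (F : Finset (Sym2 V)) (c : V) : #(nbrF F c) = degF F c := by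
  have : (nbrF F c).image (s(·, c)) = F.filter (c ∈ ·) := by
    ext e
    simp only [nbrF, mem_image, mem_filter, mem_univ, true_and]
    constructor
    · rintro ⟨x, hx, rfl⟩
      exact ⟨hx, Sym2.mem_mk_right _ _⟩
    · rintro ⟨he, hce⟩
      obtain ⟨y, rfl⟩ := Sym2.mem_iff_exists.mp hce
      exact ⟨y, Sym2.eq_swap ▸ he, Sym2.eq_swap⟩
  rw [degF, ← this, card_image_of_injective _ fun x y h => Sym2.congr_left.mp h]

lemma IsStarForest.degF_eq_one_of_mem_nbrF {x : V} (hF : IsStarForest F) (hc : 2 ≤ degF F c)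
    (hx : x ∈ nbrF F c) : degF F x = 1 := by
  have hxc : s(x, c) ∈ F := (mem_filter.mp hx).2
  obtain ⟨y, hy, hdeg⟩ := hF _ hxc
  obtain rfl | rfl := Sym2.mem_iff.mp hy
  exacts [hdeg, by omega]

lemma IsStarForest.card_biUnion_nbrF {R : Finset V} (hF : IsStarForest F) (ht : 2 ≤ t)
    (hR : ∀ c ∈ R, degF F c = t) : #(R.biUnion (nbrF F)) = t * #R := by
  rw [card_biUnion, sum_congr rfl fun c hc => (card_nbrF F c).trans (hR c hc), sum_const,
    smul_eq_mul, mul_comm]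
  intro c₁ h₁ c₂ _ hne
  refine disjoint_left.mpr fun x hx₁ hx₂ => hne (Sym2.congr_right.mp (?_ : s(x, c₁) = s(x, c₂)))
  exact eq_of_degF_le_one (hF.degF_eq_one_of_mem_nbrF (by rw [hR c₁ h₁]; exact ht) hx₁).le
    (mem_filter.mp hx₁).2 (mem_filter.mp hx₂).2 (Sym2.mem_mk_left _ _) (Sym2.mem_mk_left _ _)

end Counting

def IsDegBounded (G : SimpleGraph V) (t : ℕ) (F : Finset (Sym2 V)) : Prop :=
  ↑F ⊆ G.edgeSet ∧ ∀ v, degF F v ≤ t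

lemma IsDegBounded.mono (hF : IsDegBounded G t F) (h : F' ⊆ F) :
    IsDegBounded G t F' :=
  ⟨(coe_subset.mpr h).trans hF.1, fun v => (degF_mono h v).trans (hF.2 v)⟩

def moveLeaf (F : Finset (Sym2 V)) (ℓ c' c : V) : Finset (Sym2 V) :=
  insert s(ℓ, c) (F.erase s(ℓ, c'))

lemma degF_moveLeaf_add (hold : s(ℓ, c') ∈ F) (hnew : s(ℓ, c) ∉ F) (w : V) :
    degF (moveLeaf F ℓ c' c) w + (if w ∈ s(ℓ, c') then 1 else 0) =
      degF F w + if w ∈ s(ℓ, c) then 1 else 0 := by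
  rw [moveLeaf, degF_insert fun h => hnew (mem_of_mem_erase h), ← degF_erase_add hold w]
  omega

lemma card_moveLeaf (hold : s(ℓ, c') ∈ F) (hnew : s(ℓ, c) ∉ F) :
    #(moveLeaf F ℓ c' c) = #F := by
  rw [moveLeaf, card_insert_of_notMem fun h => hnew (mem_of_mem_erase h), card_erase_add_one hold]

lemma IsDegBounded.moveLeaf (hF : IsDegBounded G t F) (hold : s(ℓ, c') ∈ F) (hnew : s(ℓ, c) ∉ F)
    (hadj : G.Adj ℓ c) (hc : degF F c < t) (hcc' : c ≠ c') :
    IsDegBounded G t (moveLeaf F ℓ c' c) := by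
  refine ⟨?_, fun w => ?_⟩
  · rw [PathPacking.moveLeaf, coe_insert, Set.insert_subset_iff]
    exact ⟨hadj, (coe_subset.mpr (erase_subset _ _)).trans hF.1⟩
  have h := degF_moveLeaf_add hold hnew w
  have := hF.2 w
  by_cases hwc : w = c
  · subst hwc
    simp only [Sym2.mem_iff, hadj.ne.symm, hcc', or_self, if_true, if_false, add_zero, or_true] at h
    omega
  by_cases hwℓ : w = ℓ
  · subst hwℓ
    simp only [Sym2.mem_iff, true_or, if_true, Nat.add_right_cancel_iff] at h
    omega
  · simp only [Sym2.mem_iff, hwℓ, hwc, or_self, if_false, add_zero] at h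
    omega

/-- `AltChain G F c n`: `c` ends an alternating walk `v c₀ ℓ₁ c₁ ⋯ ℓₙ c` whose start `v` is not
covered by `F`, where each `ℓᵢ` is a leaf of `F` joined to `cᵢ₋₁` by an edge of `F`, and all other
steps are edges of `G`. -/
inductive AltChain (G : SimpleGraph V) (F : Finset (Sym2 V)) : V → ℕ → Prop
  | base {v c : V} : ¬ Covers F v → G.Adj v c → AltChain G F c 0
  | step {c' ℓ c : V} {n : ℕ} :
      AltChain G F c' n → degF F ℓ = 1 → s(ℓ, c') ∈ F → G.Adj ℓ c → AltChain G F c (n + 1)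

section Optimal

variable [Fintype V]

def coveredSet (F : Finset (Sym2 V)) : Finset V := univ.filter (Covers F)

@[simp] lemma mem_coveredSet : v ∈ coveredSet F ↔ Covers F v := by simp [coveredSet]

lemma coveredSet_mono (h : F ⊆ F') : coveredSet F ⊆ coveredSet F' := fun v hv => by
  obtain ⟨e, he, hve⟩ := mem_coveredSet.mp hv
  exact mem_coveredSet.mpr ⟨e, h he, hve⟩

def IsOptimal (G : SimpleGraph V) (t : ℕ) (F : Finset (Sym2 V)) : Prop :=
  IsDegBounded G t F ∧ ∀ F', IsDegBounded G t F' →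
    #(coveredSet F') ≤ #(coveredSet F) ∧ (#(coveredSet F') = #(coveredSet F) → #F ≤ #F')

lemma exists_isOptimal (G : SimpleGraph V) (t : ℕ) : ∃ F, IsOptimal G t F := by
  classical
  obtain ⟨F, hF, hmax⟩ := (univ.filter (IsDegBounded G t)).exists_max_image
    (fun F => toLex (#(coveredSet F), OrderDual.toDual #F)) ⟨∅, by simp [IsDegBounded, degF]⟩
  refine ⟨F, (mem_filter.mp hF).2, fun F' hF' => ?_⟩
  have := Prod.Lex.le_iff.mp (hmax F' (mem_filter.mpr ⟨mem_univ _, hF'⟩))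
  simp only [ofLex_toLex, OrderDual.toDual_le_toDual] at this
  omega

lemma IsOptimal.covers_of_coveredSet_subset (hF : IsOptimal G t F) (hF' : IsDegBounded G t F')
    (h : coveredSet F ⊆ coveredSet F') (hv : Covers F' v) : Covers F v := by
  by_contra hnv
  have : coveredSet F ⊂ coveredSet F' :=
    (ssubset_iff_of_subset h).mpr ⟨v, mem_coveredSet.mpr hv, mt mem_coveredSet.mp hnv⟩
  exact (card_lt_card this).not_ge (hF.2 F' hF').1

lemma IsOptimal.card_le (hF : IsOptimal G t F) (hF' : IsDegBounded G t F')
    (h : coveredSet F ⊆ coveredSet F') : #F ≤ #F' :=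
  (hF.2 F' hF').2 ((hF.2 F' hF').1.antisymm (card_le_card h))

lemma IsOptimal.of_coveredSet_eq (hF : IsOptimal G t F) (hF' : IsDegBounded G t F')
    (hcov : coveredSet F' = coveredSet F) (hcard : #F' = #F) : IsOptimal G t F' :=
  ⟨hF', fun F'' hF'' => by rw [hcov, hcard]; exact hF.2 F'' hF''⟩

/-- An edge between two vertices of degree at least two could be deleted. -/
lemma IsOptimal.isStarForest (hF : IsOptimal G t F) : IsStarForest F := by
  intro e he
  by_contra! hnone
  have hcov : coveredSet F ⊆ coveredSet (F.erase e) := by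
    intro v hv
    rw [mem_coveredSet] at hv ⊢
    obtain ⟨e', he', hve'⟩ := hv
    by_cases hee : e' = e
    · subst hee
      have := degF_pos he' hve'
      exact covers_erase_of_two_le_degF (by have := hnone v hve'; omega) _
    · exact ⟨e', mem_erase.mpr ⟨hee, he'⟩, hve'⟩
  have := hF.card_le (hF.1.mono (erase_subset e F)) hcov
  have := card_erase_lt_of_mem he
  omega

lemma IsOptimal.degF_eq_of_adj_not_covers (hF : IsOptimal G t F) (hv : ¬ Covers F v)
    (hadj : G.Adj v c) : degF F c = t := by
  by_contra hne
  have hc : degF F c < t := (hF.1.2 c).lt_of_ne hne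
  have hnew : s(v, c) ∉ F := fun h => hv ⟨_, h, Sym2.mem_mk_left _ _⟩
  have hv0 : degF F v = 0 := by simpa [covers_iff_degF_ne_zero] using hv
  have hF' : IsDegBounded G t (insert s(v, c) F) := by
    refine ⟨by simpa [Set.insert_subset_iff] using ⟨hadj, hF.1.1⟩, fun w => ?_⟩
    rw [degF_insert hnew]
    by_cases hw : w ∈ s(v, c)
    · obtain rfl | rfl := Sym2.mem_iff.mp hw <;>
        simp only [Sym2.mem_iff, true_or, or_true, if_true] <;> omega
    · simpa [hw] using hF.1.2 w
  exact hv (hF.covers_of_coveredSet_subset hF' (coveredSet_mono (subset_insert _ _))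
    ⟨_, mem_insert_self _ _, Sym2.mem_mk_left _ _⟩)

lemma coveredSet_subset_moveLeaf (hold : s(ℓ, c') ∈ F) (hc' : 2 ≤ degF F c') :
    coveredSet F ⊆ coveredSet (moveLeaf F ℓ c' c) := by
  intro w hw
  obtain ⟨e, he, hwe⟩ := mem_coveredSet.mp hw
  have herase : coveredSet (F.erase s(ℓ, c')) ⊆ coveredSet (moveLeaf F ℓ c' c) :=
    coveredSet_mono (subset_insert _ _)
  by_cases hee : e = s(ℓ, c')
  · subst hee
    obtain rfl | rfl := Sym2.mem_iff.mp hwe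
    · exact mem_coveredSet.mpr ⟨_, mem_insert_self _ _, Sym2.mem_mk_left _ _⟩
    · exact herase (mem_coveredSet.mpr (covers_erase_of_two_le_degF hc' _))
  · exact herase (mem_coveredSet.mpr ⟨e, mem_erase.mpr ⟨hee, he⟩, hwe⟩)

lemma coveredSet_moveLeaf_subset (hℓ : Covers F ℓ) (hc : Covers F c) :
    coveredSet (moveLeaf F ℓ c' c) ⊆ coveredSet F := by
  intro w hw
  obtain ⟨e, he, hwe⟩ := mem_coveredSet.mp hw
  rcases mem_insert.mp he with rfl | he
  · obtain rfl | rfl := Sym2.mem_iff.mp hwe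
    · exact mem_coveredSet.mpr hℓ
    · exact mem_coveredSet.mpr hc
  · exact mem_coveredSet.mpr ⟨e, mem_of_mem_erase he, hwe⟩

lemma IsOptimal.moveLeaf (hF : IsOptimal G t F) (hold : s(ℓ, c') ∈ F) (hnew : s(ℓ, c) ∉ F)
    (hadj : G.Adj ℓ c) (hc : degF F c < t) (hc' : 2 ≤ degF F c') (hcc' : c ≠ c') :
    IsOptimal G t (moveLeaf F ℓ c' c) ∧ coveredSet (moveLeaf F ℓ c' c) = coveredSet F := by
  have hF' := hF.1.moveLeaf hold hnew hadj hc hcc'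
  have hsub := coveredSet_subset_moveLeaf (c := c) hold hc'
  have hcov : Covers F c :=
    hF.covers_of_coveredSet_subset hF' hsub ⟨_, mem_insert_self _ _, Sym2.mem_mk_right _ _⟩
  have heq := (coveredSet_moveLeaf_subset ⟨_, hold, Sym2.mem_mk_left _ _⟩ hcov).antisymm hsub
  exact ⟨hF.of_coveredSet_eq hF' heq (card_moveLeaf hold hnew), heq⟩

/-- A chain through the leaf `ℓ` or through `c` can be cut short there. -/
lemma AltChain.moveLeaf {x : V} {m : ℕ} (h : AltChain G F x m) (hℓ : degF F ℓ = 1)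
    (hold : s(ℓ, c') ∈ F) (hnew : s(ℓ, c) ∉ F) (hadj : G.Adj ℓ c) (hc' : 2 ≤ degF F c')
    (hcov : coveredSet (moveLeaf F ℓ c' c) = coveredSet F) :
    AltChain G (moveLeaf F ℓ c' c) x m ∨ ∃ m' ≤ m, AltChain G F c m' ∨ AltChain G F ℓ m' := by
  induction h with
  | base hv hvx =>
    refine .inl (.base (fun h => hv ?_) hvx)
    exact mem_coveredSet.mp (hcov ▸ mem_coveredSet.mpr h)
  | @step b y z n d hy hyb hyz ih =>
    rcases ih with d' | ⟨m', hm', hm⟩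
    · by_cases hyℓ : y = ℓ
      · subst hyℓ
        obtain rfl : b = c' := Sym2.congr_right.mp
          (eq_of_degF_le_one hy.le hyb hold (Sym2.mem_mk_left _ _) (Sym2.mem_mk_left _ _))
        exact .inr ⟨n + 1, le_rfl, .inl (.step d hy hyb hadj)⟩
      by_cases hyc : y = c
      · subst hyc
        exact .inr ⟨n + 1, le_rfl, .inr (.step d hy hyb hadj.symm)⟩
      have hyc' : y ≠ c' := by rintro rfl; omega
      have hdeg := degF_moveLeaf_add hold hnew y
      simp only [Sym2.mem_iff, hyℓ, hyc, hyc', or_self, if_false, add_zero] at hdeg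
      refine .inl (.step d' (by omega) (mem_insert_of_mem (mem_erase.mpr ⟨fun h => ?_, hyb⟩)) hyz)
      obtain h | h := Sym2.mem_iff.mp (h ▸ Sym2.mem_mk_left y b)
      exacts [hyℓ h, hyc' h]
    · exact .inr ⟨m', hm'.trans n.le_succ, hm⟩

/-- If `c` were not saturated, flipping the chain would improve `F`; the flip is done one leaf at a
time, by strong induction on the length of the chain. -/
lemma IsOptimal.degF_eq_of_altChain (ht : 2 ≤ t) {n : ℕ} (hF : IsOptimal G t F)
    (h : AltChain G F c n) : degF F c = t := by
  induction n using Nat.strong_induction_on generalizing F c with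
  | _ n ih =>
  cases h with
  | base hv hadj => exact hF.degF_eq_of_adj_not_covers hv hadj
  | @step c' ℓ _ n d hℓ hold hadj =>
    have hc' : degF F c' = t := ih n n.lt_succ_self hF d
    by_contra hne
    have hc : degF F c < t := (hF.1.2 c).lt_of_ne hne
    have hcc' : c ≠ c' := by rintro rfl; omega
    have hnew : s(ℓ, c) ∉ F := fun h => hcc' (Sym2.congr_right.mp
      (eq_of_degF_le_one hℓ.le h hold (Sym2.mem_mk_left _ _) (Sym2.mem_mk_left _ _)))
    obtain ⟨hF', hcov⟩ := hF.moveLeaf hold hnew hadj hc (by omega) hcc'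
    rcases d.moveLeaf hℓ hold hnew hadj (by omega) hcov with d' | ⟨m, hm, dc | dℓ⟩
    · have := ih n n.lt_succ_self hF' d'
      have hdeg := degF_moveLeaf_add hold hnew c'
      simp only [Sym2.mem_iff, (hF.1.1 hold : G.Adj ℓ c').ne.symm, hcc'.symm, or_self, or_true,
        if_true, if_false, add_zero] at hdeg
      omega
    · exact hne (ih m (by omega) hF dc)
    · have := ih m (by omega) hF dℓ
      omega

lemma IsOptimal.covers [DecidableRel G.Adj] (hF : IsOptimal G t F) (ht : 2 ≤ t)
    (hcond : ∀ S, IsStable G S → #S ≤ t * #(nbr G S)) (v : V) : Covers F v := by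
  classical
  by_contra hv
  let R := univ.filter fun c => ∃ n, AltChain G F c n
  let U := univ.filter fun u => ¬ Covers F u
  let L := R.biUnion (nbrF F)
  have hR : ∀ c ∈ R, degF F c = t := fun c hc => by
    obtain ⟨n, h⟩ := (mem_filter.mp hc).2
    exact hF.degF_eq_of_altChain ht h
  have hU : ∀ u ∈ U, degF F u = 0 := fun u hu => by
    simpa [covers_iff_degF_ne_zero] using (mem_filter.mp hu).2
  have hL : ∀ x ∈ L, degF F x = 1 ∧ ∃ c ∈ R, s(x, c) ∈ F := fun x hx => by
    obtain ⟨c, hc, hxc⟩ := mem_biUnion.mp hx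
    exact ⟨hF.isStarForest.degF_eq_one_of_mem_nbrF (by rw [hR c hc]; exact ht) hxc,
      c, hc, (mem_filter.mp hxc).2⟩
  have hreach : ∀ u ∈ U ∪ L, ∀ w, G.Adj u w → w ∈ R := by
    intro u hu w huw
    refine mem_filter.mpr ⟨mem_univ _, ?_⟩
    rcases mem_union.mp hu with hu | hu
    · exact ⟨0, .base (mem_filter.mp hu).2 huw⟩
    · obtain ⟨hdeg, c, hc, huc⟩ := hL u hu
      obtain ⟨n, hn⟩ := (mem_filter.mp hc).2
      exact ⟨n + 1, .step hn hdeg huc huw⟩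
  have hsmall : ∀ u ∈ U ∪ L, degF F u ≤ 1 := fun u hu =>
    (mem_union.mp hu).elim (fun hu => (hU u hu).trans_le zero_le_one) fun hu => (hL u hu).1.le
  have hstable : IsStable G (U ∪ L) := fun u hu w hw huw => by
    have := hR w (hreach u hu w huw)
    have := hsmall w hw
    omega
  have hnbr : nbr G (U ∪ L) ⊆ R := fun w hw => by
    obtain ⟨-, -, u, hu, huw⟩ := mem_filter.mp hw
    exact hreach u hu w huw
  have hUL : #(U ∪ L) = #U + t * #R := by
    rw [card_union_of_disjoint, hF.isStarForest.card_biUnion_nbrF ht hR]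
    exact disjoint_left.mpr fun x hxU hxL => absurd (hL x hxL).1 (by rw [hU x hxU]; omega)
  have hU0 : 0 < #U := card_pos.mpr ⟨v, mem_filter.mpr ⟨mem_univ _, hv⟩⟩
  have := hcond _ hstable
  have := Nat.mul_le_mul_left t (card_le_card hnbr)
  omega

end Optimal

end PathPacking

open PathPacking Finset

theorem stmt_17 {V : Type*} [Fintype V] [DecidableEq V] (G : SimpleGraph V) [DecidableRel G.Adj]
    (k : ℕ) (hk : 1 ≤ k) :
    (∃ H : Fin k → Finset (Sym2 V),
        (∀ i, IsPathPacking G (H i)) ∧ ∀ v : V, ∃ i, Covers (H i) v) ↔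
      ∀ S : Finset V, IsStable G S → S.card ≤ 2 * k * (nbr G S).card := by
  constructor
  · rintro ⟨H, hH, hcov⟩ S hS
    calc #S ≤ ∑ i, #{e ∈ H i | ∃ v ∈ S, v ∈ e} :=
          card_le_sum_card_filter_meets (fun i => (hH i).1) hcov hS
      _ ≤ ∑ _i : Fin k, 2 * #(nbr G S) :=
          sum_le_sum fun i _ => card_filter_meets_le (hH i).1 (hH i).2.1 hS
      _ = 2 * k * #(nbr G S) := by simp [mul_comm, mul_left_comm]
  · intro hcond
    obtain ⟨F, hF⟩ := exists_isOptimal G (2 * k)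
    have hcov := hF.covers (by omega) hcond
    have hstar := hF.isStarForest
    obtain ⟨H, hHF, hFH⟩ := hstar.exists_cover_degF_le_two hF.1.2
    refine ⟨H, fun i => ⟨?_, (hHF i).2, (hstar.mono (hHF i).1).isAcyclic⟩, fun v => ?_⟩
    · exact (coe_subset.mpr (hHF i).1).trans hF.1.1
    · obtain ⟨e, he, hve⟩ := hcov v
      obtain ⟨i, hi⟩ := hFH e he
      exact ⟨i, e, hi, hve⟩
end

section
/- If a connected graph G satisfies |S| ≤ |N(S)| for every stable set S but has no perfect matching, then the vertices of G can be covered by 2 matchings but not by 1 matching. -/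
/-!
Take a matching `M` of maximum size. The vertices it misses form a stable set `U`, since an edge
between two of them could be added to `M`. By the hypothesis and Hall's theorem, `U` can be
matched injectively into its neighbourhood, which lies outside `U`; these edges form a second
matching covering `U`, and together with `M` every vertex is covered.
-/

open Finset

section

variable {V : Type*} {G : SimpleGraph V}

theorem IsStable.subset {S T : Finset V} (hT : IsStable G T) (hST : S ⊆ T) : IsStable G S :=
  fun u hu v hv => hT u (hST hu) v (hST hv)

theorem exists_isMatching_forall_card_le [Fintype V] (G : SimpleGraph V) :
    ∃ M, IsMatching G M ∧ ∀ M', IsMatching G M' → M'.card ≤ M.card := by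
  classical
  obtain ⟨M, hM, hmax⟩ := (univ.filter (IsMatching G)).exists_max_image card
    ⟨∅, by simp [IsMatching]⟩
  exact ⟨M, (mem_filter.1 hM).2, fun M' hM' => hmax M' (by simpa using hM')⟩

variable [DecidableEq V]

theorem IsMatching.insert {M : Finset (Sym2 V)} {u v : V} (hM : IsMatching G M)
    (huv : G.Adj u v) (hu : ¬ Covers M u) (hv : ¬ Covers M v) :
    IsMatching G (insert s(u, v) M) := by
  have disjoint_new : ∀ f ∈ M, ∀ w, ¬ (w ∈ s(u, v) ∧ w ∈ f) := by
    rintro f hf w ⟨hw, hwf⟩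
    rcases Sym2.mem_iff.1 hw with rfl | rfl
    exacts [hu ⟨f, hf, hwf⟩, hv ⟨f, hf, hwf⟩]
  refine ⟨?_, ?_⟩
  · rw [coe_insert, Set.insert_subset_iff]
    exact ⟨huv, hM.1⟩
  · rw [coe_insert]
    refine hM.2.insert fun f hf _ => ⟨disjoint_new f hf, fun w hw => ?_⟩
    exact disjoint_new f hf w hw.symm

theorem isMatching_image_of_injective {U : Finset V} (hU : IsStable G U) {f : U → V}
    (hf : Function.Injective f) (hadj : ∀ u : U, G.Adj u (f u)) :
    IsMatching G (univ.image fun u => s(u.1, f u)) := by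
  have hfU : ∀ u, f u ∉ U := fun u h => hU u u.2 (f u) h (hadj u)
  refine ⟨?_, ?_⟩
  · intro e he
    obtain ⟨u, -, rfl⟩ := mem_image.1 (mem_coe.1 he)
    exact hadj u
  · rintro e he e' he' hne w ⟨hw, hw'⟩
    obtain ⟨u, -, rfl⟩ := mem_image.1 (mem_coe.1 he)
    obtain ⟨v, -, rfl⟩ := mem_image.1 (mem_coe.1 he')
    rcases Sym2.mem_iff.1 hw with hu | hu <;> rcases Sym2.mem_iff.1 hw' with hv | hv
    · exact hne (by rw [Subtype.ext (hu.symm.trans hv)])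
    · exact hfU v (hu.symm.trans hv ▸ u.2)
    · exact hfU u (hv.symm.trans hu ▸ v.2)
    · exact hne (by rw [hf (hu.symm.trans hv)])

variable [Fintype V]

theorem isStable_filter_not_covers {M : Finset (Sym2 V)} (hM : IsMatching G M)
    (hmax : ∀ M', IsMatching G M' → M'.card ≤ M.card) :
    IsStable G (univ.filter fun v => ¬ Covers M v) := by
  intro u hu v hv huv
  rw [mem_filter] at hu hv
  have hnew : s(u, v) ∉ M := fun h => hu.2 ⟨_, h, Sym2.mem_mk_left u v⟩
  have := hmax _ (hM.insert huv hu.2 hv.2)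
  rw [card_insert_of_notMem hnew] at this
  omega

theorem exists_isMatching_covers_of_isStable [DecidableRel G.Adj] {U : Finset V}
    (hU : IsStable G U) (hcond : ∀ S ⊆ U, S.card ≤ (nbr G S).card) :
    ∃ M, IsMatching G M ∧ ∀ v ∈ U, Covers M v := by
  have hall : ∀ s : Finset U, s.card ≤ (s.biUnion fun u => G.neighborFinset u).card := by
    intro s
    have hsub : nbr G (s.map (.subtype _)) ⊆ s.biUnion fun u => G.neighborFinset u := by
      intro w hw
      obtain ⟨-, -, _, hu, huw⟩ := mem_filter.1 hw
      obtain ⟨u, hus, rfl⟩ := mem_map.1 hu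
      exact mem_biUnion.2 ⟨u, hus, by simpa using huw⟩
    calc s.card = (s.map (.subtype _)).card := (card_map _).symm
      _ ≤ (nbr G (s.map (.subtype _))).card :=
        hcond _ fun v hv => by obtain ⟨u, -, rfl⟩ := mem_map.1 hv; exact u.2
      _ ≤ _ := card_le_card hsub
  obtain ⟨f, hf, hfN⟩ := (all_card_le_biUnion_card_iff_exists_injective _).1 hall
  have hadj : ∀ u : U, G.Adj u (f u) := fun u => by simpa using hfN u
  exact ⟨_, isMatching_image_of_injective hU hf hadj,
    fun v hv => ⟨_, mem_image_of_mem _ (mem_univ ⟨v, hv⟩), Sym2.mem_mk_left _ _⟩⟩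

end

theorem stmt_19_general {V : Type*} [Fintype V] [DecidableEq V] (G : SimpleGraph V) [DecidableRel G.Adj]
    (hcond : ∀ S : Finset V, IsStable G S → S.card ≤ (nbr G S).card)
    (hnopm : ¬ ∃ M : Finset (Sym2 V), IsMatching G M ∧ ∀ v : V, Covers M v) :
    (∃ M : Fin 2 → Finset (Sym2 V),
        (∀ i, IsMatching G (M i)) ∧ ∀ v : V, ∃ i, Covers (M i) v) ∧
      ¬ ∃ M : Finset (Sym2 V), IsMatching G M ∧ ∀ v : V, Covers M v := by
  refine ⟨?_, hnopm⟩
  obtain ⟨M, hM, hmax⟩ := exists_isMatching_forall_card_le G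
  have hU := isStable_filter_not_covers hM hmax
  obtain ⟨M', hM', hcovers⟩ :=
    exists_isMatching_covers_of_isStable hU fun S hS => hcond S (hU.subset hS)
  refine ⟨![M, M'], fun i => by fin_cases i <;> assumption, fun v => ?_⟩
  by_cases hv : Covers M v
  · exact ⟨0, hv⟩
  · exact ⟨1, hcovers v (by simpa using hv)⟩

theorem stmt_19 {V : Type*} [Fintype V] [DecidableEq V] (G : SimpleGraph V) [DecidableRel G.Adj]
    (hG : G.Connected)
    (hcond : ∀ S : Finset V, IsStable G S → S.card ≤ (nbr G S).card)
    (hnopm : ¬ ∃ M : Finset (Sym2 V), IsMatching G M ∧ ∀ v : V, Covers M v) :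
    (∃ M : Fin 2 → Finset (Sym2 V),
        (∀ i, IsMatching G (M i)) ∧ ∀ v : V, ∃ i, Covers (M i) v) ∧
      ¬ ∃ M : Finset (Sym2 V), IsMatching G M ∧ ∀ v : V, Covers M v :=
  stmt_19_general G hcond hnopm
end
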